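/- arXiv:2512.04191 — 3 statements merged into one kernel-verified Lean document; each statement's English description precedes it below -/
import Mathlib

section
/- For every two non-empty compact sets A, B ⊆ ℝ^d, the d-dimensional Lebesgue measure of the Minkowski sum A ⊕ B satisfies Vol_d(A ⊕ B) ≥ (Vol_d(A)^{1/d} + Vol_d(B)^{1/d})^d. -/
open MeasureTheory Pointwise
open Set
open scoped ENNReal NNReal

namespace BrunnMinkowskiAux

lemma key {A B : Set ℝ} (hA : MeasurableSet A) (hB : MeasurableSet B)
    (hAb : BddAbove A) (hBb : BddBelow B) {a' b' : ℝ} (ha' : a' ∈ A) (hb' : b' ∈ B) :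
    volume (A ∩ Iic a') + volume (B ∩ Ici b') ≤ volume (A + B) := by
  set S : Set ℝ := (fun x => x + (-b')) ⁻¹' (A ∩ Iic a') with hS
  set T : Set ℝ := (fun x => -a' + x) ⁻¹' (B ∩ Ici b') with hT
  have hSvol : volume S = volume (A ∩ Iic a') := measure_preimage_add_right _ _ _
  have hTvol : volume T = volume (B ∩ Ici b') := measure_preimage_add _ _ _
  have hsub : S ∪ T ⊆ A + B := by
    rintro x (hx | hx)
    · obtain ⟨hxA, -⟩ := hx
      exact ⟨x - b', hxA, b', hb', by ring⟩
    · obtain ⟨hxB, -⟩ := hx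
      exact ⟨a', ha', -a' + x, hxB, by ring⟩
  have hint : S ∩ T ⊆ {a' + b'} := by
    rintro x ⟨⟨-, hx1⟩, ⟨-, hx2⟩⟩
    simp only [mem_Iic, mem_Ici] at hx1 hx2
    have : x = a' + b' := by linarith
    simp [this]
  have hTm : MeasurableSet T := (hB.inter measurableSet_Ici).preimage (by fun_prop)
  calc volume (A ∩ Iic a') + volume (B ∩ Ici b') = volume S + volume T := by rw [hSvol, hTvol]
    _ = volume (S ∪ T) + volume (S ∩ T) := (measure_union_add_inter S hTm).symm
    _ ≤ volume (A + B) + volume ({a' + b'} : Set ℝ) := by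
        exact add_le_add (measure_mono hsub) (measure_mono hint)
    _ = volume (A + B) := by simp

lemma oneD_core {A B : Set ℝ} (hA : MeasurableSet A) (hB : MeasurableSet B)
    (hAne : A.Nonempty) (hBne : B.Nonempty) (hAb : BddAbove A) (hBb : BddBelow B) :
    volume A + volume B ≤ volume (A + B) := by
  obtain ⟨u, hu_mono, hu_tend, hu_mem⟩ := exists_seq_tendsto_sSup hAne hAb
  obtain ⟨v, hv_mono, hv_tend, hv_mem⟩ := exists_seq_tendsto_sInf hBne hBb
  have hAsup : volume A ≤ ⨆ n, volume (A ∩ Iic (u n)) := by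
    have h1 : A \ {sSup A} ⊆ ⋃ n, A ∩ Iic (u n) := by
      intro x ⟨hxA, hxs⟩
      have hxlt : x < sSup A := lt_of_le_of_ne (le_csSup hAb hxA) (by simpa using hxs)
      obtain ⟨n, hn⟩ := (hu_tend.eventually (eventually_gt_nhds hxlt)).exists
      exact mem_iUnion.2 ⟨n, hxA, le_of_lt hn⟩
    have h2 : volume (A \ {sSup A}) = volume A := by
      refine le_antisymm (measure_mono diff_subset) ?_
      calc volume A ≤ volume (A \ {sSup A}) + volume ({sSup A} : Set ℝ) :=
            measure_mono (by intro x hx; by_cases h : x = sSup A <;> simp [h, hx]) |>.trans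
              (measure_union_le _ _)
        _ = volume (A \ {sSup A}) := by simp
    calc volume A = volume (A \ {sSup A}) := h2.symm
      _ ≤ volume (⋃ n, A ∩ Iic (u n)) := measure_mono h1
      _ = ⨆ n, volume (A ∩ Iic (u n)) := by
          refine Monotone.measure_iUnion fun m n hmn => ?_
          exact inter_subset_inter_right _ (Iic_subset_Iic.2 (hu_mono hmn))
  have hBsup : volume B ≤ ⨆ n, volume (B ∩ Ici (v n)) := by
    have h1 : B \ {sInf B} ⊆ ⋃ n, B ∩ Ici (v n) := by
      intro x ⟨hxB, hxs⟩
      have hxlt : sInf B < x := lt_of_le_of_ne (csInf_le hBb hxB) (by simpa using Ne.symm (by simpa using hxs))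
      obtain ⟨n, hn⟩ := (hv_tend.eventually (eventually_lt_nhds hxlt)).exists
      exact mem_iUnion.2 ⟨n, hxB, le_of_lt hn⟩
    have h2 : volume (B \ {sInf B}) = volume B := by
      refine le_antisymm (measure_mono diff_subset) ?_
      calc volume B ≤ volume (B \ {sInf B}) + volume ({sInf B} : Set ℝ) :=
            measure_mono (by intro x hx; by_cases h : x = sInf B <;> simp [h, hx]) |>.trans
              (measure_union_le _ _)
        _ = volume (B \ {sInf B}) := by simp
    calc volume B = volume (B \ {sInf B}) := h2.symm
      _ ≤ volume (⋃ n, B ∩ Ici (v n)) := measure_mono h1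
      _ = ⨆ n, volume (B ∩ Ici (v n)) := by
          refine Monotone.measure_iUnion fun m n hmn => ?_
          exact inter_subset_inter_right _ (Ici_subset_Ici.2 (hv_mono hmn))
  calc volume A + volume B ≤ (⨆ n, volume (A ∩ Iic (u n))) + ⨆ n, volume (B ∩ Ici (v n)) :=
        add_le_add hAsup hBsup
    _ = ⨆ n, volume (A ∩ Iic (u n)) + volume (B ∩ Ici (v n)) := by
        refine ENNReal.iSup_add_iSup fun i j => ⟨max i j, add_le_add ?_ ?_⟩
        · exact measure_mono (inter_subset_inter_right _ (Iic_subset_Iic.2 (hu_mono (le_max_left _ _))))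
        · exact measure_mono (inter_subset_inter_right _ (Ici_subset_Ici.2 (hv_mono (le_max_right _ _))))
    _ ≤ volume (A + B) := iSup_le fun n => key hA hB hAb hBb (hu_mem n) (hv_mem n)

lemma oneD {A B : Set ℝ} (hA : MeasurableSet A) (hB : MeasurableSet B)
    (hAne : A.Nonempty) (hBne : B.Nonempty) :
    volume A + volume B ≤ volume (A + B) := by
  obtain ⟨a₀, ha₀⟩ := hAne
  obtain ⟨b₀, hb₀⟩ := hBne
  set An : ℕ → Set ℝ := fun n => (A ∩ Icc (-(n : ℝ)) n) ∪ {a₀} with hAn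
  set Bn : ℕ → Set ℝ := fun n => (B ∩ Icc (-(n : ℝ)) n) ∪ {b₀} with hBn
  have hAnm : Monotone An := fun m n hmn => union_subset_union_left _
    (inter_subset_inter_right _ (Icc_subset_Icc (by exact_mod_cast neg_le_neg (Nat.cast_le.2 hmn)) (Nat.cast_le.2 hmn)))
  have hBnm : Monotone Bn := fun m n hmn => union_subset_union_left _
    (inter_subset_inter_right _ (Icc_subset_Icc (by exact_mod_cast neg_le_neg (Nat.cast_le.2 hmn)) (Nat.cast_le.2 hmn)))
  have hAU : (⋃ n, An n) = A := by
    apply subset_antisymm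
    · exact iUnion_subset fun n => union_subset inter_subset_left (by simpa using ha₀)
    · intro x hx
      obtain ⟨n, hn⟩ := exists_nat_ge |x|
      exact mem_iUnion.2 ⟨n, Or.inl ⟨hx, by rw [mem_Icc, ← abs_le]; exact hn⟩⟩
  have hBU : (⋃ n, Bn n) = B := by
    apply subset_antisymm
    · exact iUnion_subset fun n => union_subset inter_subset_left (by simpa using hb₀)
    · intro x hx
      obtain ⟨n, hn⟩ := exists_nat_ge |x|
      exact mem_iUnion.2 ⟨n, Or.inl ⟨hx, by rw [mem_Icc, ← abs_le]; exact hn⟩⟩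
  have hvolA : volume A = ⨆ n, volume (An n) := by rw [← hAU]; exact hAnm.measure_iUnion
  have hvolB : volume B = ⨆ n, volume (Bn n) := by rw [← hBU]; exact hBnm.measure_iUnion
  have hcore : ∀ n, volume (An n) + volume (Bn n) ≤ volume (A + B) := by
    intro n
    have h1 : volume (An n) + volume (Bn n) ≤ volume (An n + Bn n) := by
      refine oneD_core ((hA.inter measurableSet_Icc).union (measurableSet_singleton _))
        ((hB.inter measurableSet_Icc).union (measurableSet_singleton _))
        ⟨a₀, by simp [hAn]⟩ ⟨b₀, by simp [hBn]⟩ ?_ ?_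
      · exact (bddAbove_Icc.mono inter_subset_right).union bddAbove_singleton
      · exact (bddBelow_Icc.mono inter_subset_right).union bddBelow_singleton
    refine h1.trans (measure_mono (add_subset_add ?_ ?_))
    · exact union_subset inter_subset_left (by simpa using ha₀)
    · exact union_subset inter_subset_left (by simpa using hb₀)
  calc volume A + volume B = (⨆ n, volume (An n)) + ⨆ n, volume (Bn n) := by rw [hvolA, hvolB]
    _ = ⨆ n, volume (An n) + volume (Bn n) :=
        ENNReal.iSup_add_iSup fun i j => ⟨max i j,
          add_le_add (measure_mono (hAnm (le_max_left _ _))) (measure_mono (hBnm (le_max_right _ _)))⟩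
    _ ≤ volume (A + B) := iSup_le hcore

lemma gm_le {θ : ℝ} (h0 : 0 < θ) (h1 : θ < 1) (P Q : ℝ≥0∞) :
    P ^ (1 - θ) * Q ^ θ ≤ ENNReal.ofReal ((1 - θ) ^ (1 - θ) * θ ^ θ) * (P + Q) := by
  have h1' : (0:ℝ) < 1 - θ := by linarith
  have hm : 0 < (1 - θ) ^ (1 - θ) * θ ^ θ :=
    mul_pos (Real.rpow_pos_of_pos h1' _) (Real.rpow_pos_of_pos h0 _)
  have hmne : ENNReal.ofReal ((1 - θ) ^ (1 - θ) * θ ^ θ) ≠ 0 := by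
    simpa [ENNReal.ofReal_pos, pos_iff_ne_zero] using (ENNReal.ofReal_pos.2 hm).ne'
  rcases eq_or_ne P 0 with rfl | hP0
  · simp [ENNReal.zero_rpow_of_pos h1']
  rcases eq_or_ne Q 0 with rfl | hQ0
  · simp [ENNReal.zero_rpow_of_pos h0]
  rcases eq_or_ne P ∞ with rfl | hPt
  · have : ENNReal.ofReal ((1 - θ) ^ (1 - θ) * θ ^ θ) * (⊤ + Q) = ⊤ := by
      simp [ENNReal.mul_top, hmne]
    rw [this]; exact le_top
  rcases eq_or_ne Q ∞ with rfl | hQt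
  · have : ENNReal.ofReal ((1 - θ) ^ (1 - θ) * θ ^ θ) * (P + ⊤) = ⊤ := by
      simp [ENNReal.mul_top, hmne]
    rw [this]; exact le_top
  set p := P.toReal with hp
  set q := Q.toReal with hq
  have hppos : 0 < p := ENNReal.toReal_pos hP0 hPt
  have hqpos : 0 < q := ENNReal.toReal_pos hQ0 hQt
  have hreal : p ^ (1 - θ) * q ^ θ ≤ (1 - θ) ^ (1 - θ) * θ ^ θ * (p + q) := by
    have hgm := Real.geom_mean_le_arith_mean2_weighted h1'.le h0.le
      (div_nonneg hppos.le h1'.le) (div_nonneg hqpos.le h0.le) (by ring)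
    have e1 : (p / (1 - θ)) ^ (1 - θ) = p ^ (1 - θ) / (1 - θ) ^ (1 - θ) :=
      Real.div_rpow hppos.le h1'.le _
    have e2 : (q / θ) ^ θ = q ^ θ / θ ^ θ := Real.div_rpow hqpos.le h0.le _
    rw [e1, e2] at hgm
    have e3 : (1 - θ) * (p / (1 - θ)) + θ * (q / θ) = p + q := by
      field_simp
    rw [e3] at hgm
    rw [div_mul_div_comm] at hgm
    calc p ^ (1 - θ) * q ^ θ
        = (p ^ (1 - θ) * q ^ θ / ((1 - θ) ^ (1 - θ) * θ ^ θ)) * ((1 - θ) ^ (1 - θ) * θ ^ θ) := by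
          field_simp
      _ ≤ (p + q) * ((1 - θ) ^ (1 - θ) * θ ^ θ) := by
          exact mul_le_mul_of_nonneg_right hgm hm.le
      _ = (1 - θ) ^ (1 - θ) * θ ^ θ * (p + q) := by ring
  calc P ^ (1 - θ) * Q ^ θ = ENNReal.ofReal (p ^ (1 - θ) * q ^ θ) := by
        rw [← ENNReal.ofReal_toReal hPt, ← ENNReal.ofReal_toReal hQt,
          ENNReal.ofReal_rpow_of_pos hppos, ENNReal.ofReal_rpow_of_pos hqpos,
          ← ENNReal.ofReal_mul (by positivity)]
    _ ≤ ENNReal.ofReal ((1 - θ) ^ (1 - θ) * θ ^ θ * (p + q)) := ENNReal.ofReal_le_ofReal hreal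
    _ = ENNReal.ofReal ((1 - θ) ^ (1 - θ) * θ ^ θ) * (P + Q) := by
        rw [ENNReal.ofReal_mul hm.le, ENNReal.ofReal_add hppos.le hqpos.le,
          ENNReal.ofReal_toReal hPt, ENNReal.ofReal_toReal hQt]

lemma PL1 {θ : ℝ} (h0 : 0 < θ) (h1 : θ < 1) (f g h : ℝ → ℝ≥0∞)
    (hf : Measurable f) (hg : Measurable g) (hh : Measurable h)
    (hf_top : (⨆ x, f x) ≠ ∞) (hg_top : (⨆ x, g x) ≠ ∞)
    (hyp : ∀ x y, f x ^ (1 - θ) * g y ^ θ ≤ h (x + y)) :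
    (∫⁻ x, f x) ^ (1 - θ) * (∫⁻ x, g x) ^ θ ≤
      ENNReal.ofReal ((1 - θ) ^ (1 - θ) * θ ^ θ) * ∫⁻ x, h x := by
  have h1' : (0:ℝ) < 1 - θ := by linarith
  set Mf := ⨆ x, f x with hMf
  set Mg := ⨆ x, g x with hMg
  rcases eq_or_ne Mf 0 with hMf0 | hMf0
  · have : ∀ x, f x = 0 := fun x => le_antisymm (hMf0 ▸ le_iSup f x) zero_le
    simp [this, ENNReal.zero_rpow_of_pos h1']
  rcases eq_or_ne Mg 0 with hMg0 | hMg0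
  · have : ∀ x, g x = 0 := fun x => le_antisymm (hMg0 ▸ le_iSup g x) zero_le
    simp [this, ENNReal.zero_rpow_of_pos h0]
  set K := Mf ^ (1 - θ) * Mg ^ θ with hK
  have hK0 : K ≠ 0 := by
    simp only [hK, mul_ne_zero_iff]
    constructor <;> · rw [← pos_iff_ne_zero]; exact ENNReal.rpow_pos (pos_iff_ne_zero.2 ‹_›) ‹_›
  have hKtop : K ≠ ∞ := by
    apply ENNReal.mul_ne_top <;>
      exact ENNReal.rpow_ne_top_of_nonneg (by linarith) ‹_›
  set F := fun x => f x / Mf with hF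
  set G := fun y => g y / Mg with hG
  set H := fun z => min (h z / K) 1 with hH
  have hFm : Measurable F := hf.div_const _
  have hGm : Measurable G := hg.div_const _
  have hHm : Measurable H := (hh.div_const _).min measurable_const
  have hFle : ∀ x, F x ≤ 1 := fun x =>
    ENNReal.div_le_of_le_mul (by simpa using le_iSup f x)
  have hGle : ∀ y, G y ≤ 1 := fun y =>
    ENNReal.div_le_of_le_mul (by simpa using le_iSup g y)
  have hHle : ∀ z, H z ≤ 1 := fun z => min_le_right _ _
  -- supremum of F is 1
  have hFsup : (⨆ x, F x) = 1 := by
    rw [hF, ← ENNReal.iSup_div, ← hMf, ENNReal.div_self hMf0 hf_top]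
  have hGsup : (⨆ y, G y) = 1 := by
    rw [hG, ← ENNReal.iSup_div, ← hMg, ENNReal.div_self hMg0 hg_top]
  -- superlevel set inclusion
  have hincl : ∀ u : ℝ, u ∈ Ioo (0:ℝ) 1 →
      volume {x | ENNReal.ofReal u < F x} + volume {y | ENNReal.ofReal u < G y} ≤
        volume {z | ENNReal.ofReal u < H z} := by
    intro u ⟨hu0, hu1⟩
    have hune : (ENNReal.ofReal u) ≠ 0 := by positivity
    have hult : ENNReal.ofReal u < 1 := by
      rw [← ENNReal.ofReal_one]; exact ENNReal.ofReal_lt_ofReal_iff_of_nonneg hu0.le |>.2 hu1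
    have hsub : {x | ENNReal.ofReal u < F x} + {y | ENNReal.ofReal u < G y} ⊆
        {z | ENNReal.ofReal u < H z} := by
      rintro z ⟨x, hx, y, hy, rfl⟩
      simp only [mem_setOf_eq, hF, hG] at hx hy
      have hfx : ENNReal.ofReal u * Mf < f x := by
        rwa [ENNReal.lt_div_iff_mul_lt (Or.inl hMf0) (Or.inl hf_top)] at hx
      have hgy : ENNReal.ofReal u * Mg < g y := by
        rwa [ENNReal.lt_div_iff_mul_lt (Or.inl hMg0) (Or.inl hg_top)] at hy
      have hmul : ENNReal.ofReal u * K < h (x + y) := by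
        have step1 : (ENNReal.ofReal u * Mf) ^ (1 - θ) * (ENNReal.ofReal u * Mg) ^ θ <
            f x ^ (1 - θ) * g y ^ θ :=
          ENNReal.mul_lt_mul (ENNReal.rpow_lt_rpow hfx h1') (ENNReal.rpow_lt_rpow hgy h0)
      -- compute LHS
        have hcalc : (ENNReal.ofReal u * Mf) ^ (1 - θ) * (ENNReal.ofReal u * Mg) ^ θ =
            ENNReal.ofReal u * K := by
          rw [ENNReal.mul_rpow_of_nonneg _ _ h1'.le, ENNReal.mul_rpow_of_nonneg _ _ h0.le, hK]
          rw [show ENNReal.ofReal u ^ (1-θ) * Mf ^ (1-θ) * (ENNReal.ofReal u ^ θ * Mg ^ θ)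
              = (ENNReal.ofReal u ^ (1-θ) * ENNReal.ofReal u ^ θ) * (Mf ^ (1-θ) * Mg ^ θ) by ring]
          rw [← ENNReal.rpow_add _ _ hune ENNReal.ofReal_ne_top]
          norm_num
        calc ENNReal.ofReal u * K = (ENNReal.ofReal u * Mf) ^ (1 - θ) * (ENNReal.ofReal u * Mg) ^ θ := hcalc.symm
          _ < f x ^ (1 - θ) * g y ^ θ := step1
          _ ≤ h (x + y) := hyp x y
      simp only [mem_setOf_eq, hH, lt_min_iff]
      exact ⟨(ENNReal.lt_div_iff_mul_lt (Or.inl hK0) (Or.inl hKtop)).2 hmul, hult⟩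
    have hAne : {x | ENNReal.ofReal u < F x}.Nonempty := by
      obtain ⟨x, hx⟩ := lt_iSup_iff.1 (show ENNReal.ofReal u < ⨆ x, F x from hFsup ▸ hult)
      exact ⟨x, hx⟩
    have hBne : {y | ENNReal.ofReal u < G y}.Nonempty := by
      obtain ⟨y, hy⟩ := lt_iSup_iff.1 (show ENNReal.ofReal u < ⨆ y, G y from hGsup ▸ hult)
      exact ⟨y, hy⟩
    calc volume {x | ENNReal.ofReal u < F x} + volume {y | ENNReal.ofReal u < G y}
        ≤ volume ({x | ENNReal.ofReal u < F x} + {y | ENNReal.ofReal u < G y}) :=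
          oneD (measurableSet_lt measurable_const hFm) (measurableSet_lt measurable_const hGm)
            hAne hBne
      _ ≤ volume {z | ENNReal.ofReal u < H z} := measure_mono hsub
  -- layer cake representation
  have layer : ∀ (φ : ℝ → ℝ≥0∞), Measurable φ → (∀ x, φ x ≤ 1) →
      ∫⁻ x, φ x = ∫⁻ u in Ioi (0:ℝ), volume {x | ENNReal.ofReal u < φ x} := by
    intro φ hφm hφle
    have hne : ∀ x, φ x ≠ ∞ := fun x => ne_top_of_le_ne_top ENNReal.one_ne_top (hφle x)
    have e1 : ∀ x, φ x = ENNReal.ofReal ((φ x).toReal) := fun x =>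
      (ENNReal.ofReal_toReal (hne x)).symm
    calc ∫⁻ x, φ x = ∫⁻ x, ENNReal.ofReal ((φ x).toReal) := by
          exact lintegral_congr fun x => e1 x
      _ = ∫⁻ u in Ioi (0:ℝ), volume {x | u < (φ x).toReal} :=
          lintegral_eq_lintegral_meas_lt _ (Filter.Eventually.of_forall fun x => ENNReal.toReal_nonneg)
            hφm.ennreal_toReal.aemeasurable
      _ = ∫⁻ u in Ioi (0:ℝ), volume {x | ENNReal.ofReal u < φ x} := by
          refine setLIntegral_congr_fun measurableSet_Ioi
            (fun u hu => ?_)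
          congr 1
          ext x
          exact (ENNReal.ofReal_lt_iff_lt_toReal (le_of_lt hu) (hne x)).symm
  -- integral inequality ∫F + ∫G ≤ ∫H
  have hFGH : (∫⁻ x, F x) + (∫⁻ y, G y) ≤ ∫⁻ z, H z := by
    rw [layer F hFm hFle, layer G hGm hGle, layer H hHm hHle]
    have hmF : Measurable fun u : ℝ => volume {x | ENNReal.ofReal u < F x} := by
      apply Antitone.measurable
      intro u v huv
      exact measure_mono fun x hx => lt_of_le_of_lt (ENNReal.ofReal_le_ofReal huv) hx
    have hmH : Measurable fun u : ℝ => volume {z | ENNReal.ofReal u < H z} := by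
      apply Antitone.measurable
      intro u v huv
      exact measure_mono fun z hz => lt_of_le_of_lt (ENNReal.ofReal_le_ofReal huv) hz
    rw [← lintegral_add_left hmF]
    refine setLIntegral_mono hmH fun u hu => ?_
    rcases lt_or_ge u 1 with hu1 | hu1
    · exact hincl u ⟨hu, hu1⟩
    · have hF0 : {x | ENNReal.ofReal u < F x} = ∅ := by
        ext x; simp only [mem_setOf_eq, mem_empty_iff_false, iff_false, not_lt]
        exact (hFle x).trans (by simpa using ENNReal.one_le_ofReal.2 hu1)
      have hG0 : {y | ENNReal.ofReal u < G y} = ∅ := by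
        ext y; simp only [mem_setOf_eq, mem_empty_iff_false, iff_false, not_lt]
        exact (hGle y).trans (by simpa using ENNReal.one_le_ofReal.2 hu1)
      simp [hF0, hG0]
  -- relate integrals
  have hfF : ∫⁻ x, f x = Mf * ∫⁻ x, F x := by
    have : ∀ x, F x = Mf⁻¹ * f x := fun x => by rw [hF]; simp [div_eq_mul_inv, mul_comm]
    rw [lintegral_congr this, lintegral_const_mul' _ _ (ENNReal.inv_ne_top.2 hMf0),
      ← mul_assoc, ENNReal.mul_inv_cancel hMf0 hf_top, one_mul]
  have hgG : ∫⁻ y, g y = Mg * ∫⁻ y, G y := by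
    have : ∀ y, G y = Mg⁻¹ * g y := fun y => by rw [hG]; simp [div_eq_mul_inv, mul_comm]
    rw [lintegral_congr this, lintegral_const_mul' _ _ (ENNReal.inv_ne_top.2 hMg0),
      ← mul_assoc, ENNReal.mul_inv_cancel hMg0 hg_top, one_mul]
  have hHh : ∫⁻ z, H z ≤ K⁻¹ * ∫⁻ z, h z := by
    rw [← lintegral_const_mul' _ _ (ENNReal.inv_ne_top.2 hK0)]
    refine lintegral_mono fun z => ?_
    rw [hH]
    exact le_trans (min_le_left _ _) (by rw [div_eq_mul_inv, mul_comm])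
  -- final computation
  calc (∫⁻ x, f x) ^ (1 - θ) * (∫⁻ x, g x) ^ θ
      = K * ((∫⁻ x, F x) ^ (1 - θ) * (∫⁻ y, G y) ^ θ) := by
        rw [hfF, hgG, ENNReal.mul_rpow_of_nonneg _ _ h1'.le, ENNReal.mul_rpow_of_nonneg _ _ h0.le, hK]
        ring
    _ ≤ K * (ENNReal.ofReal ((1 - θ) ^ (1 - θ) * θ ^ θ) * ((∫⁻ x, F x) + ∫⁻ y, G y)) := by
        exact mul_le_mul_right (gm_le h0 h1 _ _) _
    _ ≤ K * (ENNReal.ofReal ((1 - θ) ^ (1 - θ) * θ ^ θ) * (K⁻¹ * ∫⁻ z, h z)) := by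
        exact mul_le_mul_right (mul_le_mul_right (hFGH.trans hHh) _) _
    _ = ENNReal.ofReal ((1 - θ) ^ (1 - θ) * θ ^ θ) * ∫⁻ x, h x := by
        rw [show K * (ENNReal.ofReal ((1 - θ) ^ (1 - θ) * θ ^ θ) * (K⁻¹ * ∫⁻ z, h z))
            = (K * K⁻¹) * (ENNReal.ofReal ((1 - θ) ^ (1 - θ) * θ ^ θ) * ∫⁻ z, h z) by ring,
          ENNReal.mul_inv_cancel hK0 hKtop, one_mul]

/-- The inductive step on the product space. -/
lemma BM_step {n : ℕ} {θ : ℝ} (h0 : 0 < θ) (h1 : θ < 1)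
    (IH : ∀ (A B : Set (Fin n → ℝ)), IsCompact A → IsCompact B → A.Nonempty → B.Nonempty →
      volume A ^ (1 - θ) * volume B ^ θ ≤
        ENNReal.ofReal ((1 - θ) ^ (1 - θ) * θ ^ θ) ^ n * volume (A + B))
    (A B : Set (ℝ × (Fin n → ℝ))) (hA : IsCompact A) (hB : IsCompact B)
    (hAne : A.Nonempty) (hBne : B.Nonempty) :
    volume A ^ (1 - θ) * volume B ^ θ ≤
      ENNReal.ofReal ((1 - θ) ^ (1 - θ) * θ ^ θ) ^ (n + 1) * volume (A + B) := by
  have h1' : (0:ℝ) < 1 - θ := by linarith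
  set c := ENNReal.ofReal ((1 - θ) ^ (1 - θ) * θ ^ θ) with hc
  have hcne : c ≠ ∞ := ENNReal.ofReal_ne_top
  set F : ℝ → ℝ≥0∞ := fun x => volume (Prod.mk x ⁻¹' A) with hF
  set G : ℝ → ℝ≥0∞ := fun y => volume (Prod.mk y ⁻¹' B) with hG
  set H : ℝ → ℝ≥0∞ := fun z => volume (Prod.mk z ⁻¹' (A + B)) with hH
  have hABc : IsCompact (A + B) := hA.add hB
  have hFm : Measurable F := measurable_measure_prodMk_left hA.measurableSet
  have hGm : Measurable G := measurable_measure_prodMk_left hB.measurableSet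
  have hHm : Measurable H := measurable_measure_prodMk_left hABc.measurableSet
  -- slices are compact
  have hslice : ∀ (C : Set (ℝ × (Fin n → ℝ))), IsCompact C → ∀ x : ℝ,
      IsCompact (Prod.mk x ⁻¹' C) := by
    intro C hC x
    refine (hC.image continuous_snd).of_isClosed_subset
      (hC.isClosed.preimage (Continuous.prodMk_right x)) ?_
    intro z hz
    exact ⟨(x, z), hz, rfl⟩
  -- sup bounds
  have hFtop : (⨆ x, F x) ≠ ∞ := by
    have hfin : volume (Prod.snd '' A) ≠ ∞ :=
      (IsCompact.measure_lt_top (μ := volume) (hA.image continuous_snd)).ne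
    refine ne_top_of_le_ne_top hfin (iSup_le fun x => ?_)
    exact measure_mono fun z hz => ⟨(x, z), hz, rfl⟩
  have hGtop : (⨆ y, G y) ≠ ∞ := by
    have hfin : volume (Prod.snd '' B) ≠ ∞ :=
      (IsCompact.measure_lt_top (μ := volume) (hB.image continuous_snd)).ne
    refine ne_top_of_le_ne_top hfin (iSup_le fun y => ?_)
    exact measure_mono fun z hz => ⟨(y, z), hz, rfl⟩
  -- the hypothesis for PL1
  have hyp : ∀ x y, F x ^ (1 - θ) * G y ^ θ ≤ (fun z => c ^ n * H z) (x + y) := by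
    intro x y
    rcases eq_empty_or_nonempty (Prod.mk x ⁻¹' A) with hempty | hne1
    · simp [hF, hempty, ENNReal.zero_rpow_of_pos h1']
    rcases eq_empty_or_nonempty (Prod.mk y ⁻¹' B) with hempty | hne2
    · simp [hG, hempty, ENNReal.zero_rpow_of_pos h0]
    have hsub : (Prod.mk x ⁻¹' A) + (Prod.mk y ⁻¹' B) ⊆ Prod.mk (x + y) ⁻¹' (A + B) := by
      rintro z ⟨za, hza, zb, hzb, rfl⟩
      exact ⟨(x, za), hza, (y, zb), hzb, rfl⟩
    calc F x ^ (1 - θ) * G y ^ θ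
        ≤ c ^ n * volume ((Prod.mk x ⁻¹' A) + (Prod.mk y ⁻¹' B)) :=
          IH _ _ (hslice A hA x) (hslice B hB y) hne1 hne2
      _ ≤ c ^ n * H (x + y) := mul_le_mul_right (measure_mono hsub) _
  have key := PL1 h0 h1 F G (fun z => c ^ n * H z) hFm hGm (hHm.const_mul _) hFtop hGtop hyp
  -- Fubini identities
  have hvolA : ∫⁻ x, F x = volume A := by
    rw [hF, ← Measure.prod_apply hA.measurableSet]; rfl
  have hvolB : ∫⁻ y, G y = volume B := by
    rw [hG, ← Measure.prod_apply hB.measurableSet]; rfl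
  have hvolAB : ∫⁻ z, H z = volume (A + B) := by
    rw [hH, ← Measure.prod_apply hABc.measurableSet]; rfl
  rw [hvolA, hvolB] at key
  rw [lintegral_const_mul' _ _ (by exact ENNReal.pow_ne_top hcne), hvolAB] at key
  calc volume A ^ (1 - θ) * volume B ^ θ ≤ c * (c ^ n * volume (A + B)) := key
    _ = c ^ (n + 1) * volume (A + B) := by rw [← mul_assoc, pow_succ, mul_comm c (c ^ n)]

lemma BMn (n : ℕ) {θ : ℝ} (h0 : 0 < θ) (h1 : θ < 1) : ∀ (A B : Set (Fin n → ℝ)),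
    IsCompact A → IsCompact B → A.Nonempty → B.Nonempty →
    volume A ^ (1 - θ) * volume B ^ θ ≤
      ENNReal.ofReal ((1 - θ) ^ (1 - θ) * θ ^ θ) ^ n * volume (A + B) := by
  induction n with
  | zero =>
    intro A B hA hB hAne hBne
    have hAu : A = univ := hAne.eq_univ
    have hBu : B = univ := hBne.eq_univ
    have hABu : A + B = univ := by
      rw [hAu, hBu]; exact (univ_nonempty.add univ_nonempty).eq_univ
    have hvol : volume (univ : Set (Fin 0 → ℝ)) = 1 := by
      rw [MeasureTheory.volume_pi, Measure.pi_univ]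
      simp
    rw [hAu, hBu] at hABu ⊢
    rw [hABu, hvol]
    simp
  | succ n IH =>
    intro A B hA hB hAne hBne
    -- transfer along the measurable equiv to ℝ × (Fin n → ℝ)
    set e := MeasurableEquiv.piFinSuccAbove (fun _ : Fin (n + 1) => ℝ) 0 with he
    have hmp : MeasurePreserving e :=
      volume_preserving_piFinSuccAbove (fun _ : Fin (n + 1) => ℝ) 0
    have hecont : Continuous e := by
      show Continuous fun x : Fin (n+1) → ℝ => ((Fin.insertNthEquiv (fun _ => ℝ) 0).symm x)
      simp only [Fin.insertNthEquiv_symm_apply, Fin.removeNth]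
      exact continuous_prodMk.2 ⟨continuous_apply 0, continuous_pi fun j => continuous_apply _⟩
    have headd : ∀ x y : Fin (n + 1) → ℝ, e (x + y) = e x + e y := by
      intro x y
      show (Fin.insertNthEquiv (fun _ => ℝ) 0).symm (x + y) = _
      simp only [Fin.insertNthEquiv_symm_apply]
      rfl
    have himage : ∀ C D : Set (Fin (n+1) → ℝ), e '' (C + D) = e '' C + e '' D := by
      intro C D
      ext z
      constructor
      · rintro ⟨w, ⟨cc, hcc, dd, hdd, rfl⟩, rfl⟩
        exact ⟨e cc, ⟨cc, hcc, rfl⟩, e dd, ⟨dd, hdd, rfl⟩, (headd cc dd).symm⟩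
      · rintro ⟨zc, ⟨cc, hcc, rfl⟩, zd, ⟨dd, hdd, rfl⟩, rfl⟩
        exact ⟨cc + dd, ⟨cc, hcc, dd, hdd, rfl⟩, headd cc dd⟩
    have hvol : ∀ C : Set (Fin (n+1) → ℝ), MeasurableSet C → volume (e '' C) = volume C := by
      intro C hC
      rw [MeasurableEquiv.image_eq_preimage_symm]
      exact (MeasurePreserving.symm e hmp).measure_preimage hC.nullMeasurableSet
    have := BM_step h0 h1 IH (e '' A) (e '' B) (hA.image hecont) (hB.image hecont)
      (hAne.image e) (hBne.image e)
    rwa [hvol A hA.measurableSet, hvol B hB.measurableSet, ← himage,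
      hvol _ (hA.add hB).measurableSet] at this

end BrunnMinkowskiAux

open BrunnMinkowskiAux in
/-- Brunn–Minkowski inequality: for nonempty compact `A, B ⊆ ℝ^d`,
`Vol(A ⊕ B) ≥ (Vol(A)^{1/d} + Vol(B)^{1/d})^d`, where `A + B` is the Minkowski sum. -/
theorem stmt_2 (d : ℕ) (hd : 1 ≤ d) (A B : Set (EuclideanSpace ℝ (Fin d)))
    (hA : IsCompact A) (hB : IsCompact B) (hAne : A.Nonempty) (hBne : B.Nonempty) :
    (volume A ^ ((d : ℝ)⁻¹) + volume B ^ ((d : ℝ)⁻¹)) ^ (d : ℝ) ≤ volume (A + B) := by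
  have hd0 : (0:ℝ) < d := by exact_mod_cast hd
  -- transfer to `Fin d → ℝ`
  set e := (MeasurableEquiv.toLp 2 (Fin d → ℝ)).symm with he
  have hmp : MeasurePreserving e := EuclideanSpace.volume_preserving_symm_measurableEquiv_toLp (Fin d)
  have hecont : Continuous e := by
    show Continuous fun x : EuclideanSpace ℝ (Fin d) => (WithLp.ofLp x)
    exact PiLp.continuous_ofLp 2 _
  have headd : ∀ x y : EuclideanSpace ℝ (Fin d), e (x + y) = e x + e y := fun x y => rfl
  have himage : ∀ C D : Set (EuclideanSpace ℝ (Fin d)), e '' (C + D) = e '' C + e '' D := by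
    intro C D
    ext z
    constructor
    · rintro ⟨w, ⟨cc, hcc, dd, hdd, rfl⟩, rfl⟩
      exact ⟨e cc, ⟨cc, hcc, rfl⟩, e dd, ⟨dd, hdd, rfl⟩, (headd cc dd).symm⟩
    · rintro ⟨zc, ⟨cc, hcc, rfl⟩, zd, ⟨dd, hdd, rfl⟩, rfl⟩
      exact ⟨cc + dd, ⟨cc, hcc, dd, hdd, rfl⟩, headd cc dd⟩
  have hvol : ∀ C : Set (EuclideanSpace ℝ (Fin d)), MeasurableSet C →
      volume (e '' C) = volume C := by
    intro C hC
    rw [MeasurableEquiv.image_eq_preimage_symm]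
    exact (MeasurePreserving.symm e hmp).measure_preimage hC.nullMeasurableSet
  set A₁ := e '' A with hA₁
  set B₁ := e '' B with hB₁
  have hA₁c : IsCompact A₁ := hA.image hecont
  have hB₁c : IsCompact B₁ := hB.image hecont
  have hA₁ne : A₁.Nonempty := hAne.image e
  have hB₁ne : B₁.Nonempty := hBne.image e
  have hvA : volume A = volume A₁ := (hvol A hA.measurableSet).symm
  have hvB : volume B = volume B₁ := (hvol B hB.measurableSet).symm
  have hvAB : volume (A + B) = volume (A₁ + B₁) := by
    rw [← himage]; exact (hvol _ (hA.add hB).measurableSet).symm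
  rw [hvA, hvB, hvAB]
  -- trivial cases: one of the volumes is zero
  have haddle : ∀ (C D : Set (Fin d → ℝ)), C.Nonempty → volume D ≤ volume (C + D) := by
    intro C D ⟨c, hc⟩
    have hsub : (fun x => -c + x) ⁻¹' D ⊆ C + D := by
      intro x hx
      exact ⟨c, hc, -c + x, hx, by ring⟩
    calc volume D = volume ((fun x => -c + x) ⁻¹' D) := (measure_preimage_add _ _ _).symm
      _ ≤ volume (C + D) := measure_mono hsub
  have hAfin : volume A₁ ≠ ∞ := (IsCompact.measure_lt_top (μ := volume) hA₁c).ne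
  have hBfin : volume B₁ ≠ ∞ := (IsCompact.measure_lt_top (μ := volume) hB₁c).ne
  have hid : ∀ v : ℝ≥0∞, (v ^ ((d:ℝ)⁻¹)) ^ (d:ℝ) = v := by
    intro v
    rw [← ENNReal.rpow_mul, inv_mul_cancel₀ hd0.ne', ENNReal.rpow_one]
  rcases eq_or_ne (volume A₁) 0 with hvA0 | hvA0
  · rw [hvA0, ENNReal.zero_rpow_of_pos (by positivity), zero_add, hid]
    exact haddle A₁ B₁ hA₁ne
  rcases eq_or_ne (volume B₁) 0 with hvB0 | hvB0
  · rw [hvB0, ENNReal.zero_rpow_of_pos (by positivity), add_zero, hid]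
    calc volume A₁ ≤ volume (B₁ + A₁) := haddle B₁ A₁ hB₁ne
      _ = volume (A₁ + B₁) := by rw [add_comm]
  -- main case
  set va := (volume A₁).toReal with hva
  set vb := (volume B₁).toReal with hvb
  have hvapos : 0 < va := ENNReal.toReal_pos hvA0 hAfin
  have hvbpos : 0 < vb := ENNReal.toReal_pos hvB0 hBfin
  set α := va ^ ((d:ℝ)⁻¹) with hα
  set β := vb ^ ((d:ℝ)⁻¹) with hβ
  have hαpos : 0 < α := Real.rpow_pos_of_pos hvapos _
  have hβpos : 0 < β := Real.rpow_pos_of_pos hvbpos _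
  set s := α + β with hs
  have hspos : 0 < s := by positivity
  set θ := β / s with hθ
  have h0 : 0 < θ := by positivity
  have h1 : θ < 1 := by
    rw [hθ, div_lt_one hspos]; rw [hs]; linarith
  have h1θ : 1 - θ = α / s := by
    rw [hθ, hs]; field_simp; ring
  -- BMn inequality
  have hbm := BMn d h0 h1 A₁ B₁ hA₁c hB₁c hA₁ne hB₁ne
  -- real arithmetic identity:  va^{1-θ} vb^θ = m^d * s^d
  set m := (1 - θ) ^ (1 - θ) * θ ^ θ with hm
  have hmpos : 0 < m := by
    have := h1; have := h0
    exact mul_pos (Real.rpow_pos_of_pos (by linarith) _) (Real.rpow_pos_of_pos h0 _)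
  have hαs : α = s * (1 - θ) := by rw [h1θ]; field_simp
  have hβs : β = s * θ := by rw [hθ]; field_simp
  have hva_eq : va = α ^ (d:ℝ) := by
    rw [hα, ← Real.rpow_mul hvapos.le, inv_mul_cancel₀ hd0.ne', Real.rpow_one]
  have hvb_eq : vb = β ^ (d:ℝ) := by
    rw [hβ, ← Real.rpow_mul hvbpos.le, inv_mul_cancel₀ hd0.ne', Real.rpow_one]
  -- real identity
  have hident : va ^ (1 - θ) * vb ^ θ = m ^ (d:ℝ) * s ^ (d:ℝ) := by
    have hLpos : 0 < va ^ (1 - θ) * vb ^ θ := by positivity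
    have hRpos : 0 < m ^ (d:ℝ) * s ^ (d:ℝ) := by positivity
    have hlog : Real.log (va ^ (1 - θ) * vb ^ θ) = Real.log (m ^ (d:ℝ) * s ^ (d:ℝ)) := by
      rw [Real.log_mul (Real.rpow_pos_of_pos hvapos _).ne' (Real.rpow_pos_of_pos hvbpos _).ne',
        Real.log_mul (Real.rpow_pos_of_pos hmpos _).ne' (Real.rpow_pos_of_pos hspos _).ne',
        Real.log_rpow hvapos, Real.log_rpow hvbpos, Real.log_rpow hmpos, Real.log_rpow hspos]
      have hlogva : Real.log va = (d:ℝ) * Real.log α := by rw [hva_eq, Real.log_rpow hαpos]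
      have hlogvb : Real.log vb = (d:ℝ) * Real.log β := by rw [hvb_eq, Real.log_rpow hβpos]
      have hlogα : Real.log α = Real.log s + Real.log (1 - θ) := by
        rw [hαs, Real.log_mul hspos.ne' (show (0:ℝ) < 1 - θ by linarith).ne']
      have hlogβ : Real.log β = Real.log s + Real.log θ := by
        rw [hβs, Real.log_mul hspos.ne' h0.ne']
      have hlogm : Real.log m = (1 - θ) * Real.log (1 - θ) + θ * Real.log θ := by
        rw [hm, Real.log_mul (Real.rpow_pos_of_pos (show (0:ℝ) < 1 - θ by linarith) _).ne'
            (Real.rpow_pos_of_pos h0 _).ne',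
          Real.log_rpow (show (0:ℝ) < 1 - θ by linarith), Real.log_rpow h0]
      rw [hlogva, hlogvb, hlogα, hlogβ, hlogm]
      ring
    have := congrArg Real.exp hlog
    rwa [Real.exp_log hLpos, Real.exp_log hRpos] at this
  -- now conclude in ℝ≥0∞
  have hgoal_lhs : (volume A₁ ^ ((d:ℝ)⁻¹) + volume B₁ ^ ((d:ℝ)⁻¹)) ^ (d:ℝ)
      = ENNReal.ofReal (s ^ (d:ℝ)) := by
    rw [← ENNReal.ofReal_toReal hAfin, ← ENNReal.ofReal_toReal hBfin,
      ENNReal.ofReal_rpow_of_pos hvapos, ENNReal.ofReal_rpow_of_pos hvbpos,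
      ← ENNReal.ofReal_add (by positivity) (by positivity),
      ENNReal.ofReal_rpow_of_pos hspos]
  have hbm_lhs : volume A₁ ^ (1 - θ) * volume B₁ ^ θ
      = ENNReal.ofReal (m ^ (d:ℝ)) * ENNReal.ofReal (s ^ (d:ℝ)) := by
    rw [← ENNReal.ofReal_toReal hAfin, ← ENNReal.ofReal_toReal hBfin,
      ENNReal.ofReal_rpow_of_pos hvapos, ENNReal.ofReal_rpow_of_pos hvbpos,
      ← ENNReal.ofReal_mul (by positivity), hident,
      ENNReal.ofReal_mul (by positivity)]
  have hcpow : (ENNReal.ofReal m) ^ d = ENNReal.ofReal (m ^ (d:ℝ)) := by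
    rw [← ENNReal.ofReal_pow hmpos.le]
    exact congrArg _ (Real.rpow_natCast m d).symm
  rw [hbm_lhs, hcpow] at hbm
  rw [hgoal_lhs]
  have hcne0 : ENNReal.ofReal (m ^ (d:ℝ)) ≠ 0 := by
    simp only [ne_eq, ENNReal.ofReal_eq_zero, not_le]
    positivity
  exact (ENNReal.mul_le_mul_iff_right hcne0 ENNReal.ofReal_ne_top).1 hbm
end

section
/- Fix d ≥ 2 and ε > 0. There exists η = η(ε, d) > 0 such that for every compact set A ⊆ [0,∞)^d with ℓ∞-diameter at least ε·ρ (for some ρ > 0), and x ∈ A a point of minimal ℓ1-norm in A, one has Vol_d(A_ρ) ≥ Vol_d(A) + Vol_d({x}_ρ) + η ρ^d, where for S ⊆ [0,∞)^d, S_ρ := (S ⊕ B(0,ρ)) ∩ [0,∞)^d. -/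
open MeasureTheory Metric Pointwise

namespace Stmt5Aux

open Set

noncomputable def onesE (d : ℕ) : EuclideanSpace ℝ (Fin d) := WithLp.toLp 2 (fun _ => 1)

lemma onesE_apply (d : ℕ) (i : Fin d) : onesE d i = 1 := rfl

lemma norm_onesE (d : ℕ) : ‖onesE d‖ = Real.sqrt d := by
  refine (EuclideanSpace.norm_eq (onesE d)).trans ?_
  simp [onesE_apply]

lemma euc_abs_coord_le_dist {d : ℕ} (y z : EuclideanSpace ℝ (Fin d)) (j : Fin d) :
    |y j - z j| ≤ dist y z := by
  rw [EuclideanSpace.dist_eq, ← Real.sqrt_sq_eq_abs]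
  apply Real.sqrt_le_sqrt
  have h := Finset.single_le_sum (f := fun i => dist (y i) (z i) ^ 2)
    (fun i _ => sq_nonneg _) (Finset.mem_univ j)
  simpa [Real.dist_eq, sq_abs] using h

lemma euc_sum_le {d : ℕ} (v : EuclideanSpace ℝ (Fin d)) :
    ∑ i, v i ≤ Real.sqrt d * ‖v‖ := by
  have h2 : ((∑ i, v i) ^ 2 : ℝ) ≤ (d : ℝ) * ∑ i, (v i) ^ 2 := by
    simpa using sq_sum_le_card_mul_sum_sq (s := (Finset.univ : Finset (Fin d)))
      (f := fun i => v i)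
  calc ∑ i, v i ≤ |∑ i, v i| := le_abs_self _
    _ = Real.sqrt ((∑ i, v i) ^ 2) := (Real.sqrt_sq_eq_abs _).symm
    _ ≤ Real.sqrt ((d : ℝ) * ∑ i, (v i) ^ 2) := Real.sqrt_le_sqrt h2
    _ = Real.sqrt d * Real.sqrt (∑ i, (v i) ^ 2) := Real.sqrt_mul (by positivity) _
    _ = Real.sqrt d * ‖v‖ := by
        rw [EuclideanSpace.norm_eq v]
        simp [Real.norm_eq_abs, sq_abs]

lemma hyperplane_null {d : ℕ} (hd : 0 < d) (t : ℝ) :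
    volume {y : EuclideanSpace ℝ (Fin d) | ∑ i, y i = t} = 0 := by
  classical
  have hd' : (0 : ℝ) < d := by exact_mod_cast hd
  set p : Submodule ℝ (EuclideanSpace ℝ (Fin d)) :=
    { carrier := {y : EuclideanSpace ℝ (Fin d) | ∑ i, y i = 0}
      add_mem' := by
        intro a b ha hb
        simp only [Set.mem_setOf_eq] at *
        simp only [PiLp.add_apply, Finset.sum_add_distrib, ha, hb, add_zero]
      zero_mem' := by
        simp only [Set.mem_setOf_eq, PiLp.zero_apply, Finset.sum_const_zero]
      smul_mem' := by
        intro c a ha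
        simp only [Set.mem_setOf_eq] at *
        simp only [PiLp.smul_apply, smul_eq_mul, ← Finset.mul_sum, ha, mul_zero] } with hpdef
  have hmem : ∀ y : EuclideanSpace ℝ (Fin d), y ∈ p ↔ ∑ i, y i = 0 := fun y => Iff.rfl
  have hp : p ≠ ⊤ := by
    intro h
    have h1 : onesE d ∈ p := h ▸ Submodule.mem_top
    rw [hmem] at h1
    simp only [onesE_apply, Finset.sum_const, Finset.card_univ, Fintype.card_fin,
      nsmul_eq_mul, mul_one] at h1
    exact absurd h1 (ne_of_gt hd')
  have key : {y : EuclideanSpace ℝ (Fin d) | ∑ i, y i = t}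
      = ((t / d) • onesE d) +ᵥ (p : Set (EuclideanSpace ℝ (Fin d))) := by
    ext y
    rw [Set.mem_vadd_set_iff_neg_vadd_mem]
    simp only [SetLike.mem_coe, vadd_eq_add, Set.mem_setOf_eq, hmem]
    have hcoord : ∀ i, (-((t / d) • onesE d) + y) i = -(t / d) + y i := by
      intro i
      simp [PiLp.add_apply, PiLp.neg_apply, PiLp.smul_apply, onesE_apply]
    rw [Finset.sum_congr rfl fun i _ => hcoord i, Finset.sum_add_distrib]
    simp only [Finset.sum_const, Finset.card_univ, Fintype.card_fin, nsmul_eq_mul]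
    have : (d : ℝ) * -(t / d) = -t := by field_simp
    rw [this]
    constructor
    · intro h; rw [h]; ring
    · intro h; linarith
  rw [key, measure_vadd]
  exact Measure.addHaar_submodule volume p hp

end Stmt5Aux

open Stmt5Aux

set_option maxHeartbeats 1000000 in
/-- Penrose's orthant lemma: for `d ≥ 2` and `ε > 0` there is `η > 0` such that for every
`ρ > 0` and every nonempty compact `A` contained in the positive orthant of `ℝ^d` with
`ℓ∞`-diameter at least `ε·ρ`, and every point `x ∈ A` of minimal `ℓ1`-norm in `A`,
`Vol(A_ρ) ≥ Vol(A) + Vol({x}_ρ) + η ρ^d`, where `S_ρ = (S ⊕ B(0,ρ)) ∩ [0,∞)^d`. -/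
theorem stmt_5 (d : ℕ) (hd : 2 ≤ d) (ε : ℝ) (hε : 0 < ε) :
    ∃ η : ℝ, 0 < η ∧ ∀ ρ : ℝ, 0 < ρ →
      ∀ A : Set (EuclideanSpace ℝ (Fin d)),
        IsCompact A → A.Nonempty →
        A ⊆ {y : EuclideanSpace ℝ (Fin d) | ∀ i, 0 ≤ y i} →
        (∃ a ∈ A, ∃ b ∈ A, ∃ i, ε * ρ ≤ |a i - b i|) →
        ∀ x ∈ A, (∀ y ∈ A, ∑ i, |x i| ≤ ∑ i, |y i|) →
          volume A
            + volume (({x} + closedBall (0 : EuclideanSpace ℝ (Fin d)) ρ)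
                ∩ {y : EuclideanSpace ℝ (Fin d) | ∀ i, 0 ≤ y i})
            + ENNReal.ofReal (η * ρ ^ d)
          ≤ volume ((A + closedBall (0 : EuclideanSpace ℝ (Fin d)) ρ)
                ∩ {y : EuclideanSpace ℝ (Fin d) | ∀ i, 0 ≤ y i}) := by
  classical
  set E := EuclideanSpace ℝ (Fin d) with hE
  have hd' : (2 : ℝ) ≤ (d : ℝ) := by exact_mod_cast hd
  have hd0 : (0 : ℝ) < d := by linarith
  set sd : ℝ := Real.sqrt d with hsd
  have hsd0 : 0 < sd := Real.sqrt_pos.mpr hd0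
  have hsd2 : sd ^ 2 = d := Real.sq_sqrt (le_of_lt hd0)
  have hsd43 : 4 / 3 < sd := by nlinarith
  have hsdd : sd ≤ d := by nlinarith
  set ε'' : ℝ := min (ε / (2 * d)) (1 / 2) with hε''def
  have hε''pos : 0 < ε'' := lt_min (by positivity) (by norm_num)
  have hε''half : ε'' ≤ 1 / 2 := min_le_right _ _
  have hε''ed : ε'' ≤ ε / (2 * d) := min_le_left _ _
  set δ : ℝ := ε'' / (8 * d) with hδdef
  have hδpos : 0 < δ := by positivity
  set σ : ℝ := 1 - ε'' / 2 with hσdef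
  have hσ34 : 3 / 4 ≤ σ := by rw [hσdef]; linarith
  have hC1 : σ + δ * sd + δ ≤ 1 := by
    have h1 : δ * sd + δ ≤ δ * d + δ * d := by nlinarith
    have h2 : δ * d = ε'' / 8 := by rw [hδdef]; field_simp
    rw [hσdef]; nlinarith
  set Vb : ENNReal := volume (ball (0 : EuclideanSpace ℝ (Fin d)) 1) with hVb
  have hVbpos : 0 < Vb := measure_ball_pos volume _ one_pos
  have hVbfin : Vb ≠ ⊤ := measure_ball_lt_top.ne
  clear_value sd ε'' δ σ
  refine ⟨δ ^ d * Vb.toReal, mul_pos (pow_pos hδpos d) (ENNReal.toReal_pos hVbpos.ne' hVbfin), ?_⟩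
  intro ρ hρ A hA hne hAO hdiam x hxA hxmin
  set O : Set E := {y : EuclideanSpace ℝ (Fin d) | ∀ i, 0 ≤ y i} with hO
  set s : ℝ := ∑ i, x i with hsdef
  have hsum_min : ∀ y ∈ A, s ≤ ∑ i, y i := by
    intro y hy
    have h1 := hxmin y hy
    have h2 : ∑ i, |x i| = ∑ i, x i :=
      Finset.sum_congr rfl fun i _ => abs_of_nonneg (hAO hxA i)
    have h3 : ∑ i, |y i| = ∑ i, y i :=
      Finset.sum_congr rfl fun i _ => abs_of_nonneg (hAO hy i)
    rw [h2, h3] at h1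
    exact h1
  -- Step 1: find a coordinate k and a point c ∈ A with c k ≥ x k + ε'' * ρ
  have step1 : ∃ k : Fin d, ∃ c ∈ A, x k + ε'' * ρ ≤ c k := by
    obtain ⟨p, hp, q, hq, i, hpq⟩ := hdiam
    have key : ∀ p ∈ A, ∀ q ∈ A, ε * ρ ≤ p i - q i → ∃ k : Fin d, ∃ c ∈ A, x k + ε'' * ρ ≤ c k := by
      intro p hp q hq h
      by_cases hc : x i + ε * ρ / 2 ≤ p i
      · refine ⟨i, p, hp, ?_⟩
        have : ε'' * ρ ≤ ε * ρ / 2 := by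
          have : ε'' ≤ ε / 2 := le_trans hε''ed (by rw [div_le_div_iff₀ (by positivity) (by norm_num)]; nlinarith)
          nlinarith
        linarith
      · push_neg at hc
        have hqx : ε * ρ / 2 < x i - q i := by linarith
        by_contra hno
        push_neg at hno
        have hno' : ∀ k : Fin d, q k - x k < ε'' * ρ := by
          intro k
          have := hno k q hq
          linarith
        have hsum0 : (0 : ℝ) ≤ ∑ j, (q j - x j) := by
          rw [Finset.sum_sub_distrib]
          have := hsum_min q hq
          linarith
        have hsplit : ∑ j, (q j - x j)
            = (q i - x i) + ∑ j ∈ Finset.univ.erase i, (q j - x j) :=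
          (Finset.add_sum_erase _ (fun j => q j - x j) (Finset.mem_univ i)).symm
        have herased : ε * ρ / 2 < ∑ j ∈ Finset.univ.erase i, (q j - x j) := by
          have : ∑ j, (q j - x j) ≥ 0 := hsum0
          linarith [hsplit, hqx, hsum0]
        have hcard : (Finset.univ.erase i).card = d - 1 := by
          rw [Finset.card_erase_of_mem (Finset.mem_univ i), Finset.card_univ, Fintype.card_fin]
        have hbound : ∑ j ∈ Finset.univ.erase i, (q j - x j)
            < ∑ j ∈ Finset.univ.erase i, ε'' * ρ := by
          apply Finset.sum_lt_sum_of_nonempty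
          · rw [← Finset.card_pos, hcard]; omega
          · intro j _; exact hno' j
        rw [Finset.sum_const, hcard, nsmul_eq_mul] at hbound
        have hcast : ((d - 1 : ℕ) : ℝ) = (d : ℝ) - 1 := by
          have : (1 : ℕ) ≤ d := by omega
          push_cast [Nat.cast_sub this]
          ring
        rw [hcast] at hbound
        -- (d-1) * ε'' * ρ ≤ (d-1) * (ε/(2d)) * ρ < ε*ρ/2
        have hfinal : ((d : ℝ) - 1) * (ε'' * ρ) ≤ ε * ρ / 2 := by
          have h1 : ((d : ℝ) - 1) * ε'' ≤ ((d : ℝ) - 1) * (ε / (2 * d)) := by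
            apply mul_le_mul_of_nonneg_left hε''ed (by linarith)
          have h2 : ((d : ℝ) - 1) * (ε / (2 * d)) ≤ ε / 2 := by
            have ht0 : (0:ℝ) ≤ ε / (2 * d) := by positivity
            have ht1 : (d : ℝ) * (ε / (2 * d)) = ε / 2 := by field_simp
            nlinarith
          nlinarith
        linarith
    rcases le_abs.mp hpq with h | h
    · exact key p hp q hq (by linarith)
    · exact key q hq p hp (by linarith)
  obtain ⟨k, c, hcA, hck⟩ := step1
  -- the maximizer of coordinate k on A
  obtain ⟨a, haA, hamax'⟩ := hA.exists_isMaxOn hne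
    ((PiLp.continuous_apply 2 _ k).continuousOn : ContinuousOn (fun y : E => y k) A)
  have hamax : ∀ y ∈ A, y k ≤ a k := fun y hy => hamax' hy
  -- vectors
  set w : E := (ρ / sd) • onesE d with hwdef
  have hwi : ∀ i, w i = ρ / sd := by
    intro i; rw [hwdef]; simp [PiLp.smul_apply, onesE_apply]
  have hwnorm : ‖w‖ = ρ := by
    rw [hwdef, norm_smul, norm_onesE, Real.norm_eq_abs, abs_of_nonneg (by positivity)]
    field_simp
    exact hsd.symm
  set z : E := a + (σ * ρ) • EuclideanSpace.single k (1 : ℝ) + (δ * ρ) • onesE d with hzdef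
  have hzi : ∀ j, z j = a j + (if j = k then σ * ρ else 0) + δ * ρ := by
    intro j
    rw [hzdef]
    simp [PiLp.add_apply, PiLp.smul_apply, EuclideanSpace.single_apply, onesE_apply,
      mul_ite, mul_one, mul_zero]
  have hσρ : (0:ℝ) ≤ σ * ρ := mul_nonneg (by rw [hσdef]; linarith) hρ.le
  have hzk : z k = a k + σ * ρ + δ * ρ := by rw [hzi k, if_pos rfl]
  have hzj_ge : ∀ j, a j + δ * ρ ≤ z j := by
    intro j; rw [hzi j]; split
    · linarith
    · linarith
  have hza : ‖z - a‖ ≤ σ * ρ + δ * ρ * sd := by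
    have : z - a = (σ * ρ) • EuclideanSpace.single k (1 : ℝ) + (δ * ρ) • onesE d := by
      rw [hzdef]; abel
    rw [this]
    refine le_trans (norm_add_le _ _) ?_
    rw [norm_smul, norm_smul, EuclideanSpace.norm_single, norm_onesE]
    simp only [Real.norm_eq_abs, norm_one, mul_one]
    rw [abs_of_nonneg hσρ, abs_of_nonneg (by positivity), ← hsd]
  -- the three sets
  set S : Set E := w +ᵥ A with hSdef
  set T : Set E := closedBall x ρ ∩ O with hTdef
  set F : Set E := closedBall z (δ * ρ) with hFdef
  -- basic inclusions
  have hball : ∀ y : E, y ∈ F → ∀ j, |y j - z j| ≤ δ * ρ := by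
    intro y hy j
    exact le_trans (euc_abs_coord_le_dist y z j) (mem_closedBall.mp hy)
  have hSsub : S ⊆ (A + closedBall (0 : E) ρ) ∩ O := by
    intro y hyS
    obtain ⟨a', ha', hy⟩ := hyS
    have hy' : w + a' = y := hy
    have hcoord : ∀ i, y i = ρ / sd + a' i := by
      intro i; rw [← hy', PiLp.add_apply, hwi]
    constructor
    · refine Set.mem_add.mpr ⟨a', ha', w, ?_, by rw [← hy']; exact add_comm a' w⟩
      rw [mem_closedBall_zero_iff, hwnorm]
    · intro j
      rw [hcoord j]
      have h0 : (0:ℝ) ≤ ρ / sd := by positivity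
      have := hAO ha' j
      linarith
  have hTsub : T ⊆ (A + closedBall (0 : E) ρ) ∩ O := by
    rintro y ⟨hy1, hy2⟩
    refine ⟨Set.mem_add.mpr ⟨x, hxA, y - x, ?_, by abel⟩, hy2⟩
    rw [mem_closedBall_zero_iff, ← dist_eq_norm]
    exact mem_closedBall.mp hy1
  have hFsub : F ⊆ (A + closedBall (0 : E) ρ) ∩ O := by
    intro y hy
    constructor
    · refine Set.mem_add.mpr ⟨a, haA, y - a, ?_, by abel⟩
      rw [mem_closedBall_zero_iff]
      calc ‖y - a‖ = ‖(y - z) + (z - a)‖ := by rw [sub_add_sub_cancel]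
        _ ≤ ‖y - z‖ + ‖z - a‖ := norm_add_le _ _
        _ ≤ δ * ρ + (σ * ρ + δ * ρ * sd) := by
            refine add_le_add ?_ hza
            rw [← dist_eq_norm]; exact mem_closedBall.mp hy
        _ ≤ ρ := by nlinarith
    · intro j
      have h1 := hball y hy j
      have h2 := hzj_ge j
      have h3 := hAO haA j
      have := abs_le.mp h1
      linarith [this.1]
  -- levels
  have hS_level : ∀ y ∈ S, s + sd * ρ ≤ ∑ i, y i := by
    intro y hyS
    obtain ⟨a', ha', hy⟩ := hyS
    have hy' : w + a' = y := hy
    have hcoord : ∀ i : Fin d, y i = ρ / sd + a' i := by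
      intro i; rw [← hy', PiLp.add_apply, hwi]
    rw [Finset.sum_congr rfl fun i (_ : i ∈ Finset.univ) => hcoord i, Finset.sum_add_distrib]
    simp only [Finset.sum_const, Finset.card_univ, Fintype.card_fin, nsmul_eq_mul]
    have h2 : (d : ℝ) * (ρ / sd) = sd * ρ := by
      rw [← hsd2]; field_simp
    rw [h2]
    have := hsum_min a' ha'
    linarith
  have hT_level : ∀ y ∈ T, ∑ i, y i ≤ s + sd * ρ := by
    rintro y ⟨hy1, _⟩
    have h1 : ∑ i, (y i - x i) ≤ sd * ρ := by
      have h2 : ∑ i, (y - x) i ≤ sd * ‖y - x‖ := by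
        rw [hsd]; exact euc_sum_le (y - x)
      have h3 : ∀ i : Fin d, (y - x) i = y i - x i := fun i => rfl
      rw [Finset.sum_congr rfl fun i _ => h3 i] at h2
      have h4 : ‖y - x‖ ≤ ρ := by
        rw [← dist_eq_norm]; exact mem_closedBall.mp hy1
      nlinarith
    rw [Finset.sum_sub_distrib] at h1
    rw [hsdef]
    linarith
  -- S ∩ T is null
  have hST_null : volume (S ∩ T) = 0 := by
    have hsub : S ∩ T ⊆ {y : EuclideanSpace ℝ (Fin d) | ∑ i, y i = s + sd * ρ} := by
      rintro y ⟨hyS, hyT⟩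
      exact le_antisymm (hT_level y hyT) (hS_level y hyS)
    exact measure_mono_null hsub (hyperplane_null (by omega) _)
  -- F is disjoint from S and T
  have hFS : Disjoint F S := by
    rw [Set.disjoint_left]
    intro y hyF hyS
    obtain ⟨a', ha', hy⟩ := hyS
    have hy' : w + a' = y := hy
    have h1 : y k = ρ / sd + a' k := by
      rw [← hy', PiLp.add_apply, hwi]
    have h2 := hamax a' ha'
    have h4 := (abs_le.mp (hball _ hyF k)).1
    rw [hzk] at h4
    have h6 : ρ / sd < σ * ρ := by
      rw [div_lt_iff₀ hsd0]
      have t1 : (3/4:ℝ) * sd ≤ σ * sd := mul_le_mul_of_nonneg_right hσ34 hsd0.le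
      have t2 : (3/4:ℝ) * (4/3) < (3/4:ℝ) * sd := by linarith
      have hsσ : (1:ℝ) < σ * sd := by linarith
      nlinarith [hsσ, hρ]
    rw [h1] at h4
    linarith
  have hFT : Disjoint F T := by
    rw [Set.disjoint_left]
    rintro y hyF ⟨hy1, _⟩
    have h3 := hball _ hyF k
    have h4 := (abs_le.mp h3).1
    rw [hzk] at h4
    have h5 : a k + σ * ρ ≤ y k := by linarith
    have h6 : c k ≤ a k := hamax c hcA
    have h7 : y k - x k ≤ ρ := by
      have h8 := le_trans (euc_abs_coord_le_dist y x k) (mem_closedBall.mp hy1)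
      exact (abs_le.mp h8).2
    -- x k + ε'' ρ + σ ρ ≤ c k + σ ρ ≤ a k + σ ρ ≤ y k ≤ x k + ρ
    have : ε'' * ρ + σ * ρ ≤ ρ := by linarith [hck]
    rw [hσdef] at this
    nlinarith
  -- measurability
  have hAmeas : MeasurableSet A := hA.measurableSet
  have hOmeas : MeasurableSet O := by
    have : IsClosed O := by
      have : O = ⋂ i : Fin d, {y : E | 0 ≤ y i} := by
        ext y; simp [hO, Set.mem_iInter]; exact Iff.rfl
      rw [this]
      exact isClosed_iInter fun i =>
        isClosed_le continuous_const (PiLp.continuous_apply 2 _ i)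
    exact this.measurableSet
  have hTmeas : MeasurableSet T := measurableSet_closedBall.inter hOmeas
  have hFmeas : MeasurableSet F := measurableSet_closedBall
  -- volume computations
  have hvolS : volume S = volume A := by rw [hSdef, measure_vadd]
  have hvolSdT : volume (S \ T) = volume A := by
    rw [← Set.diff_self_inter, measure_diff_null hST_null, hvolS]
  have hvolF : volume F = ENNReal.ofReal (δ ^ d * Vb.toReal * ρ ^ d) := by
    rw [hFdef, Measure.addHaar_closedBall volume z (by positivity)]
    rw [finrank_euclideanSpace_fin (𝕜 := ℝ) (n := d)]
    rw [show δ ^ d * Vb.toReal * ρ ^ d = (δ * ρ) ^ d * Vb.toReal by rw [mul_pow]; ring]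
    rw [ENNReal.ofReal_mul (by positivity), ENNReal.ofReal_toReal hVbfin]
  -- the singleton translate of the ball
  have hxball : ({x} + closedBall (0 : E) ρ) = closedBall x ρ := by
    ext y
    simp only [Set.mem_add, Set.mem_singleton_iff, mem_closedBall_zero_iff, mem_closedBall]
    constructor
    · rintro ⟨u, rfl, v, hv, rfl⟩
      rw [dist_eq_norm]
      simpa using hv
    · intro h
      refine ⟨x, rfl, y - x, ?_, by abel⟩
      simpa [dist_eq_norm] using h
  -- final chain
  have hunion_sub : (S \ T) ∪ T ∪ F ⊆ (A + closedBall (0 : E) ρ) ∩ O := by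
    refine Set.union_subset (Set.union_subset ?_ hTsub) hFsub
    exact fun y hy => hSsub hy.1
  have hdisj1 : Disjoint (S \ T) T := disjoint_sdiff_self_left
  have hdisj2 : Disjoint ((S \ T) ∪ T) F := by
    rw [Set.disjoint_union_left]
    exact ⟨(hFS.symm.mono_left Set.diff_subset), hFT.symm⟩
  have hvol_union : volume ((S \ T) ∪ T ∪ F)
      = volume A + volume T + ENNReal.ofReal (δ ^ d * Vb.toReal * ρ ^ d) := by
    rw [measure_union hdisj2 hFmeas, measure_union hdisj1 hTmeas, hvolSdT, hvolF]
  calc volume A + volume (({x} + closedBall (0 : E) ρ) ∩ O)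
        + ENNReal.ofReal (δ ^ d * Vb.toReal * ρ ^ d)
      = volume A + volume T + ENNReal.ofReal (δ ^ d * Vb.toReal * ρ ^ d) := by
        rw [hxball]
    _ = volume ((S \ T) ∪ T ∪ F) := hvol_union.symm
    _ ≤ volume ((A + closedBall (0 : E) ρ) ∩ O) := measure_mono hunion_sub
end

section
/- Fix k ≥ 1, d ≥ 1 and suitable t_2 = 2c^d r^{-d} log log(1/r). Let M-nonfull cubes be the cubes of the side-(r/c) tessellation T containing fewer than M points among t_2 i.i.d. uniform torus points. Then the expected number of M-nonfull cubes equals Σ_{i=0}^{M-1} (c/r)^d · C(t_2, i) (r/c)^{id} (1-(r/c)^d)^{t_2 - i} = Θ((log log(1/r))^{M-1} / (r^d (log(1/r))^2)) = o(|T|/log(1/r)) as r → 0. -/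
open MeasureTheory ProbabilityTheory Filter Asymptotics

noncomputable section

/-- The `d`-dimensional unit torus `ℝ^d/ℤ^d`. -/
abbrev Torus (d : ℕ) := Fin d → AddCircle (1 : ℝ)

/-- The distance on the torus inherited from the Euclidean distance on `ℝ^d`. -/
def tdist {d : ℕ} (x y : Torus d) : ℝ :=
  Real.sqrt (∑ i, dist (x i) (y i) ^ 2)

/-- The volume `θ_d` of the unit ball in `ℝ^d`. -/
def ballVol (d : ℕ) : ℝ :=
  (volume (Metric.ball (0 : EuclideanSpace ℝ (Fin d)) 1)).toReal

/-- The degree of the `i`-th point in the geometric graph with radius `r` on the points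
`P 0, …, P (n-1)` of the torus: the number of other points within distance `r`. -/
def degC {d n : ℕ} (r : ℝ) (P : Fin n → Torus d) (i : Fin n) : ℕ :=
  Nat.card {j : Fin n // j ≠ i ∧ tdist (P j) (P i) ≤ r}

/-- The number of vertices of degree exactly `κ` in the geometric graph with radius `r`
on the points `P 0, …, P (n-1)`. -/
def Zcount {d n : ℕ} (r : ℝ) (P : Fin n → Torus d) (κ : ℕ) : ℕ :=
  Nat.card {i : Fin n // degC r P i = κ}
/-- The cube of the tessellation of the torus into `n^d` congruent axis-parallel cubes of
side length `1/n` (here `1/n = r/c`, i.e. `r = c/n`), indexed by `z : Fin d → Fin n`. -/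
def tcube {d : ℕ} (n : ℕ) (z : Fin d → Fin n) : Set (Torus d) :=
  {x | ∀ i, x i ∈ (fun u : ℝ => (u : AddCircle (1 : ℝ))) ''
      Set.Ico ((z i : ℝ) / n) (((z i : ℝ) + 1) / n)}

/-- The number of `M`-nonfull cubes, i.e. cubes of the tessellation containing fewer
than `M` of the points `P 0, …, P (t-1)`. -/
def nonfullCount {d : ℕ} (n t M : ℕ) (P : Fin t → Torus d) : ℕ :=
  Nat.card {z : Fin d → Fin n // Nat.card {i : Fin t // P i ∈ tcube n z} < M}


/-! ### Auxiliary lemmas -/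

section Aux
open Set

attribute [local instance] Classical.propDecidable


lemma circle_image_eq (a b : ℝ) (hb : b ≤ a + 1) :
    (fun u : ℝ => (u : AddCircle (1:ℝ))) '' Ico a b
      = (AddCircle.measurableEquivIco (1:ℝ) a) ⁻¹' {y | (y : ℝ) < b} := by
  ext x
  simp only [mem_image, mem_preimage, mem_setOf_eq]
  constructor
  · rintro ⟨y, hy, rfl⟩
    have hy' : y ∈ Ico a (a + 1) := ⟨hy.1, lt_of_lt_of_le hy.2 hb⟩
    have : (AddCircle.equivIco (1:ℝ) a) ↑y = ⟨y, hy'⟩ := by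
      rw [Equiv.apply_eq_iff_eq_symm_apply]; rfl
    show ((AddCircle.equivIco (1:ℝ) a) ↑y : ℝ) < b
    rw [this]; exact hy.2
  · intro h
    refine ⟨(AddCircle.equivIco (1:ℝ) a x : ℝ), ⟨(AddCircle.equivIco (1:ℝ) a x).2.1, h⟩, ?_⟩
    exact (AddCircle.equivIco (1:ℝ) a).symm_apply_apply x

lemma circle_meas (a b : ℝ) (hb : b ≤ a + 1) :
    MeasurableSet ((fun u : ℝ => (u : AddCircle (1:ℝ))) '' Ico a b) := by
  rw [circle_image_eq a b hb]
  exact (AddCircle.measurableEquivIco (1:ℝ) a).measurable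
    (measurable_subtype_coe measurableSet_Iio)

lemma circle_vol (a b : ℝ) (hab : a ≤ b) (hb : b ≤ a + 1) :
    volume ((fun u : ℝ => (u : AddCircle (1:ℝ))) '' Ico a b) = ENNReal.ofReal (b - a) := by
  set S := (fun u : ℝ => (u : AddCircle (1:ℝ))) '' Ico a b with hS
  have hmeas := circle_meas a b hb
  have hpre : MeasurableSet ((fun u : ℝ => (u : AddCircle (1:ℝ))) ⁻¹' S) :=
    AddCircle.measurable_mk' hmeas
  have hmp := AddCircle.measurePreserving_mk (1:ℝ) (b - 1)
  have key : volume (((fun u : ℝ => (u : AddCircle (1:ℝ))) ⁻¹' S) ∩ Ioc (b-1) b) = volume S := by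
    have h1 := hmp.measure_preimage hmeas.nullMeasurableSet
    rw [Measure.restrict_apply hpre] at h1
    simpa [sub_add_cancel] using h1
  rw [← key]
  have hsub1 : Ioo a b ⊆ ((fun u : ℝ => (u : AddCircle (1:ℝ))) ⁻¹' S) ∩ Ioc (b-1) b := by
    intro x hx
    refine ⟨⟨x, ⟨hx.1.le, hx.2⟩, rfl⟩, ⟨by linarith [hx.1, hb], hx.2.le⟩⟩
  have hsub2 : ((fun u : ℝ => (u : AddCircle (1:ℝ))) ⁻¹' S) ∩ Ioc (b-1) b ⊆ Icc a b := by
    rintro x ⟨hx1, hx2⟩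
    obtain ⟨y, hy, hxy⟩ := hx1
    have : ∃ k : ℤ, x = y + k := by
      have h2 : (y : AddCircle (1:ℝ)) = (x : AddCircle (1:ℝ)) := hxy
      rw [QuotientAddGroup.eq] at h2
      obtain ⟨k, hk⟩ := AddSubgroup.mem_zmultiples_iff.mp h2
      refine ⟨k, ?_⟩
      have h3 : (k : ℝ) * 1 = -y + x := by
        rw [← zsmul_eq_mul]; exact hk
      simp only [mul_one] at h3
      linarith
    obtain ⟨k, hk⟩ := this
    have hk1 : (0:ℤ) ≤ k := by
      by_contra hcon
      push_neg at hcon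
      have : (k:ℝ) ≤ -1 := by exact_mod_cast Int.le_sub_one_of_lt hcon
      have := hx2.1; have := hy.2; linarith
    have hk2 : k ≤ 1 := by
      by_contra hcon
      push_neg at hcon
      have : (2:ℝ) ≤ (k:ℝ) := by exact_mod_cast hcon
      have := hx2.2; have := hy.1; linarith
    interval_cases k
    · simp only [Int.cast_zero, add_zero] at hk
      exact ⟨hk ▸ hy.1, hk ▸ hy.2.le⟩
    · push_cast at hk
      exact ⟨by linarith [hy.1, hb], hx2.2⟩
  refine le_antisymm ?_ ?_
  · calc volume _ ≤ volume (Icc a b) := measure_mono hsub2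
      _ = ENNReal.ofReal (b - a) := by rw [Real.volume_Icc]
  · calc ENNReal.ofReal (b - a) = volume (Ioo a b) := (Real.volume_Ioo).symm
      _ ≤ _ := measure_mono hsub1

lemma side_bound {n : ℕ} (hn : 1 ≤ n) (m : Fin n) :
    ((m : ℝ) + 1) / n ≤ (m : ℝ) / n + 1 := by
  have h1 : (1:ℝ) ≤ n := by exact_mod_cast hn
  have h0 : (0:ℝ) < n := by linarith
  have : (m:ℝ) ≥ 0 := by positivity
  rw [div_le_iff₀ h0]
  have : (m:ℝ)/n * n = m := by field_simp
  nlinarith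

lemma tcube_eq {d n : ℕ} (z : Fin d → Fin n) :
    tcube n z = Set.pi univ (fun i =>
      (fun u : ℝ => (u : AddCircle (1:ℝ))) '' Ico ((z i : ℝ) / n) (((z i : ℝ) + 1) / n)) := by
  ext x; simp [tcube, Set.mem_pi]

lemma tcube_meas {d n : ℕ} (hn : 1 ≤ n) (z : Fin d → Fin n) :
    MeasurableSet (tcube n z) := by
  rw [tcube_eq]
  exact MeasurableSet.univ_pi fun i => circle_meas _ _ (side_bound hn (z i))

lemma tcube_vol {d n : ℕ} (hn : 1 ≤ n) (z : Fin d → Fin n) :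
    volume (tcube n z) = ENNReal.ofReal ((1 / n : ℝ) ^ d) := by
  rw [tcube_eq, volume_pi_pi]
  have hn' : (0:ℝ) < n := by positivity
  have : ∀ i : Fin d, volume ((fun u : ℝ => (u : AddCircle (1:ℝ))) ''
      Ico ((z i : ℝ) / n) (((z i : ℝ) + 1) / n)) = ENNReal.ofReal (1 / n : ℝ) := by
    intro i
    have hle : ((z i : ℝ)) / n ≤ ((z i : ℝ) + 1) / n := by
      gcongr; linarith
    rw [circle_vol _ _ hle (side_bound hn (z i))]
    congr 1
    field_simp
    ring
  simp only [this, Finset.prod_const, Finset.card_univ, Fintype.card_fin]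
  rw [← ENNReal.ofReal_pow (by positivity)]

lemma card_bridge (t : ℕ) (Q : ℕ → Prop) :
    Nat.card {i : Fin t // Q ↑i} = ((Finset.range t).filter Q).card := by
  rw [Nat.card_eq_fintype_card, Fintype.card_subtype]
  apply Finset.card_bij (fun (a : Fin t) _ => (a : ℕ))
  · intro a ha
    simp only [Finset.mem_filter, Finset.mem_range]
    exact ⟨a.2, (Finset.mem_filter.mp ha).2⟩
  · intro a _ b _ h
    exact Fin.val_injective h
  · intro b hb
    obtain ⟨hb1, hb2⟩ := Finset.mem_filter.mp hb
    exact ⟨⟨b, Finset.mem_range.mp hb1⟩, Finset.mem_filter.mpr ⟨Finset.mem_univ _, hb2⟩, rfl⟩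



variable {Ω : Type*} [MeasureSpace Ω] [IsProbabilityMeasure (ℙ : Measure Ω)]
variable {α : Type*} [MeasurableSpace α]

section
variable (Y : ℕ → Ω → α) (S : Set α) (t : ℕ)

/-- the event that the points falling in `S` among the first `t` are exactly `A` -/
def exactEvent (A : Finset ℕ) : Set Ω :=
  ⋂ i ∈ Finset.range t, Y i ⁻¹' (if i ∈ A then S else Sᶜ)

lemma exactEvent_meas (hY : ∀ i, Measurable (Y i)) (hS : MeasurableSet S) (A : Finset ℕ) :
    MeasurableSet (exactEvent Y S t A) := by
  apply MeasurableSet.biInter (Finset.range t).countable_toSet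
  intro i _
  exact (hY i) (by split <;> [exact hS; exact hS.compl])

lemma mem_exactEvent_iff (A : Finset ℕ) (hA : A ⊆ Finset.range t) (ω : Ω) :
    ω ∈ exactEvent Y S t A ↔ (Finset.range t).filter (fun i => Y i ω ∈ S) = A := by
  simp only [exactEvent, mem_iInter, mem_preimage]
  constructor
  · intro h
    ext i
    simp only [Finset.mem_filter]
    constructor
    · rintro ⟨hi, hiS⟩
      have := h i hi
      by_contra hiA
      rw [if_neg hiA] at this
      exact this hiS
    · intro hiA
      refine ⟨hA hiA, ?_⟩
      have := h i (hA hiA)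
      rwa [if_pos hiA] at this
  · intro h i hi
    by_cases hiA : i ∈ A
    · rw [if_pos hiA]
      have : i ∈ (Finset.range t).filter (fun i => Y i ω ∈ S) := h ▸ hiA
      exact (Finset.mem_filter.mp this).2
    · rw [if_neg hiA]
      intro hiS
      exact hiA (h ▸ Finset.mem_filter.mpr ⟨hi, hiS⟩)

lemma exactEvent_prob (hY : ∀ i, Measurable (Y i)) (hS : MeasurableSet S)
    (hind : iIndepFun Y ℙ) (q : ENNReal)
    (hq : ∀ i, ℙ (Y i ⁻¹' S) = q) (A : Finset ℕ) (hA : A ⊆ Finset.range t) :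
    ℙ (exactEvent Y S t A) = q ^ A.card * (1 - q) ^ (t - A.card) := by
  have hprod := hind.measure_inter_preimage_eq_mul (Finset.range t)
    (sets := fun i => if i ∈ A then S else Sᶜ)
    (fun i _ => by by_cases h : i ∈ A <;> simp [h, hS, hS.compl])
  rw [exactEvent, hprod]
  have hcompl : ∀ i, ℙ (Y i ⁻¹' Sᶜ) = 1 - q := by
    intro i
    rw [Set.preimage_compl, measure_compl ((hY i) hS) (measure_ne_top _ _), hq i,
      measure_univ]
  calc ∏ i ∈ Finset.range t, ℙ (Y i ⁻¹' (if i ∈ A then S else Sᶜ))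
      = ∏ i ∈ Finset.range t, (if i ∈ A then q else 1 - q) := by
        apply Finset.prod_congr rfl
        intro i _
        split <;> simp_all [hq, hcompl]
    _ = (∏ i ∈ Finset.range t \ A, (if i ∈ A then q else 1 - q))
        * ∏ i ∈ A, (if i ∈ A then q else 1 - q) := (Finset.prod_sdiff hA).symm
    _ = q ^ A.card * (1 - q) ^ (t - A.card) := by
        rw [mul_comm]
        congr 1
        · rw [Finset.prod_congr rfl (fun i hi => if_pos hi), Finset.prod_const]
        · rw [Finset.prod_congr rfl (fun i hi => if_neg (Finset.mem_sdiff.mp hi).2),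
            Finset.prod_const, Finset.card_sdiff_of_subset hA, Finset.card_range]

lemma countEvent_eq_union (j : ℕ) :
    {ω | ((Finset.range t).filter (fun i => Y i ω ∈ S)).card = j}
      = ⋃ A ∈ Finset.powersetCard j (Finset.range t), exactEvent Y S t A := by
  ext ω
  simp only [mem_setOf_eq, mem_iUnion, Finset.mem_powersetCard]
  constructor
  · intro h
    exact ⟨(Finset.range t).filter (fun i => Y i ω ∈ S), ⟨Finset.filter_subset _ _, h⟩,
      (mem_exactEvent_iff Y S t _ (Finset.filter_subset _ _) ω).mpr rfl⟩
  · rintro ⟨A, ⟨hA, hcard⟩, hmem⟩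
    rw [(mem_exactEvent_iff Y S t A hA ω).mp hmem]
    exact hcard

lemma binom_prob (hY : ∀ i, Measurable (Y i)) (hS : MeasurableSet S)
    (hind : iIndepFun Y ℙ) (q : ENNReal)
    (hq : ∀ i, ℙ (Y i ⁻¹' S) = q) (j : ℕ) :
    ℙ {ω | ((Finset.range t).filter (fun i => Y i ω ∈ S)).card = j}
      = (t.choose j) * q ^ j * (1 - q) ^ (t - j) := by
  rw [countEvent_eq_union]
  rw [measure_biUnion_finset ?_ (fun A _ => exactEvent_meas Y S t hY hS A)]
  · rw [Finset.sum_congr rfl (fun A hA => ?_)]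
    · rw [Finset.sum_const, Finset.card_powersetCard, Finset.card_range, nsmul_eq_mul, mul_assoc]
    · obtain ⟨hA, hcard⟩ := Finset.mem_powersetCard.mp hA
      rw [exactEvent_prob Y S t hY hS hind q hq A hA, hcard]
  · intro A hA B hB hAB
    obtain ⟨hA', _⟩ := Finset.mem_powersetCard.mp hA
    obtain ⟨hB', _⟩ := Finset.mem_powersetCard.mp hB
    rw [Function.onFun, Set.disjoint_left]
    intro ω hωA hωB
    exact hAB ((((mem_exactEvent_iff Y S t A hA' ω).mp hωA).symm.trans
      ((mem_exactEvent_iff Y S t B hB' ω).mp hωB)) ▸ rfl)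

lemma nonfull_prob (hY : ∀ i, Measurable (Y i)) (hS : MeasurableSet S)
    (hind : iIndepFun Y ℙ) (q : ENNReal)
    (hq : ∀ i, ℙ (Y i ⁻¹' S) = q) (M : ℕ) :
    ℙ {ω | ((Finset.range t).filter (fun i => Y i ω ∈ S)).card < M}
      = ∑ j ∈ Finset.range M, (t.choose j) * q ^ j * (1 - q) ^ (t - j) := by
  have hset : {ω | ((Finset.range t).filter (fun i => Y i ω ∈ S)).card < M}
      = ⋃ j ∈ Finset.range M,
        {ω | ((Finset.range t).filter (fun i => Y i ω ∈ S)).card = j} := by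
    ext ω
    simp only [mem_setOf_eq, mem_iUnion, Finset.mem_range]
    exact ⟨fun h => ⟨_, h, rfl⟩, fun ⟨j, hj, he⟩ => he ▸ hj⟩
  rw [hset, measure_biUnion_finset ?_ ?_]
  · exact Finset.sum_congr rfl fun j _ => binom_prob Y S t hY hS hind q hq j
  · intro i _ j _ hij
    rw [Function.onFun, Set.disjoint_left]
    intro ω h1 h2
    exact hij (h1.symm.trans h2)
  · intro j _
    rw [countEvent_eq_union]
    exact (Finset.powersetCard j (Finset.range t)).measurableSet_biUnion
      (fun A _ => exactEvent_meas Y S t hY hS A)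

lemma nonfull_meas (hY : ∀ i, Measurable (Y i)) (hS : MeasurableSet S) (M : ℕ) :
    MeasurableSet {ω | ((Finset.range t).filter (fun i => Y i ω ∈ S)).card < M} := by
  have : {ω | ((Finset.range t).filter (fun i => Y i ω ∈ S)).card < M}
      = ⋃ A ∈ (Finset.range t).powerset.filter (fun A => A.card < M), exactEvent Y S t A := by
    ext ω
    simp only [mem_setOf_eq, mem_iUnion, Finset.mem_filter, Finset.mem_powerset]
    constructor
    · intro h
      exact ⟨_, ⟨Finset.filter_subset _ _, h⟩,
        (mem_exactEvent_iff Y S t _ (Finset.filter_subset _ _) ω).mpr rfl⟩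
    · rintro ⟨A, ⟨hA, hcard⟩, hmem⟩
      rw [(mem_exactEvent_iff Y S t A hA ω).mp hmem]; exact hcard
  rw [this]
  exact Finset.measurableSet_biUnion _ (fun A _ => exactEvent_meas Y S t hY hS A)
end

def Fsum (d M : ℕ) (t : ℕ → ℕ) (n : ℕ) : ℝ :=
  ∑ j ∈ Finset.range M, (n:ℝ)^d * ((t n).choose j : ℝ) * ((1/(n:ℝ))^d)^j
    * (1 - (1/(n:ℝ))^d)^(t n - j)

set_option maxHeartbeats 1000000 in
lemma key_bounds (d c M : ℕ) (hd : 1 ≤ d) (hc : 1 ≤ c) (hM : 1 ≤ M) (t : ℕ → ℕ)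
    (ht : ∀ᶠ n in atTop, t n = ⌊2*(n:ℝ)^d * Real.log (Real.log ((n:ℝ)/c))⌋₊) :
    ∀ᶠ n : ℕ in atTop,
      1 ≤ Real.log (Real.log ((n:ℝ)/c)) ∧ 1 ≤ Real.log ((n:ℝ)/c) ∧
      (1/((M-1).factorial * Real.exp 1))
          * ((n:ℝ)^d * (Real.log (Real.log ((n:ℝ)/c)))^(M-1) / (Real.log ((n:ℝ)/c))^2)
        ≤ Fsum d M t n ∧
      Fsum d M t n ≤ ((M:ℝ)*4^(M-1)*Real.exp 1)
          * ((n:ℝ)^d * (Real.log (Real.log ((n:ℝ)/c)))^(M-1) / (Real.log ((n:ℝ)/c))^2) := by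
  have hc0 : (0:ℝ) < c := by exact_mod_cast hc
  -- tendsto facts
  have hLt : Tendsto (fun n : ℕ => Real.log ((n:ℝ)/c)) atTop atTop :=
    Real.tendsto_log_atTop.comp ((tendsto_natCast_atTop_atTop).atTop_div_const hc0)
  have hLLt : Tendsto (fun n : ℕ => Real.log (Real.log ((n:ℝ)/c))) atTop atTop :=
    Real.tendsto_log_atTop.comp hLt
  have e1 : ∀ᶠ n : ℕ in atTop, 1 ≤ Real.log ((n:ℝ)/c) := hLt.eventually_ge_atTop 1
  have e2 : ∀ᶠ n : ℕ in atTop, 1 ≤ Real.log (Real.log ((n:ℝ)/c)) := hLLt.eventually_ge_atTop 1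
  have e3 : ∀ᶠ n : ℕ in atTop, 4 * Real.log (n:ℝ) ≤ (n:ℝ) := by
    have := Real.isLittleO_log_id_atTop.def (by norm_num : (0:ℝ) < 1/4)
    have h4 := tendsto_natCast_atTop_atTop.eventually this
    filter_upwards [h4, eventually_ge_atTop 1] with n hn hn1
    have hn1' : (1:ℝ) ≤ n := by exact_mod_cast hn1
    have hn0 : (0:ℝ) ≤ n := by linarith
    simp only [Real.norm_eq_abs, id_eq] at hn
    rw [abs_of_nonneg (Real.log_nonneg hn1'), abs_of_nonneg hn0] at hn
    linarith
  have e4 : ∀ᶠ n : ℕ in atTop, ((M:ℝ)+1) ≤ (n:ℝ) := by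
    have := tendsto_natCast_atTop_atTop (R := ℝ) |>.eventually_ge_atTop ((M:ℝ)+1)
    exact this
  filter_upwards [ht, e1, e2, e3, e4, eventually_ge_atTop 2] with n htn hL1 hLL1 hlog4 hMn hn2
  set L := Real.log ((n:ℝ)/c) with hLdef
  set LL := Real.log L with hLLdef
  -- basic facts
  have hn1' : (1:ℝ) ≤ n := by exact_mod_cast le_trans one_le_two hn2
  have hn2' : (2:ℝ) ≤ n := by exact_mod_cast hn2
  set A : ℝ := (n:ℝ)^d with hAdef
  have hnA : (n:ℝ) ≤ A := le_self_pow₀ hn1' (by omega)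
  have hA2 : (2:ℝ) ≤ A := le_trans hn2' hnA
  have hA0 : (0:ℝ) < A := by linarith
  set p : ℝ := (1/(n:ℝ))^d with hpdef
  have hpA : p = 1/A := by rw [hpdef, hAdef, div_pow, one_pow]
  have hp0 : 0 < p := by rw [hpA]; positivity
  have hpA1 : p * A = 1 := by rw [hpA]; field_simp
  have hphalf : p ≤ 1/2 := by
    rw [hpA]
    rw [div_le_div_iff₀ hA0 (by norm_num)]
    linarith
  have h1p : 0 < 1 - p := by linarith
  have hL0 : (0:ℝ) < L := by linarith
  have hLL0 : (0:ℝ) < LL := by linarith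
  have hLLL : LL ≤ L := by
    have := Real.log_le_sub_one_of_pos hL0
    rw [← hLLdef] at this; linarith
  have hLlogn : L ≤ Real.log n := by
    rw [hLdef]
    apply Real.log_le_log (by positivity)
    apply div_le_self (by linarith) (by exact_mod_cast hc)
  have h4LL : 4 * LL ≤ A := by
    calc 4 * LL ≤ 4 * Real.log n := by linarith
      _ ≤ (n:ℝ) := hlog4
      _ ≤ A := hnA
  have h4LLp : 4 * LL * p ≤ 1 := by
    calc 4 * LL * p ≤ A * p := by
          apply mul_le_mul_of_nonneg_right h4LL hp0.le
      _ = 1 := by linarith [hpA1]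
  -- t bounds
  have htnn : (0:ℝ) ≤ 2*A*LL := by positivity
  have ht_le : (t n : ℝ) ≤ 2*A*LL := by
    rw [htn]; exact Nat.floor_le htnn
  have ht_gt : 2*A*LL - 1 < (t n : ℝ) := by
    rw [htn]
    have := Nat.lt_floor_add_one (2*A*LL)
    linarith
  have hMA : (M:ℝ) + 1 ≤ A := le_trans hMn hnA
  have hALL : A ≤ A * LL := le_mul_of_one_le_right hA0.le hLL1
  have hALLp : 2*A*LL*p = 2*LL := by
    calc 2*A*LL*p = 2*LL*(p*A) := by ring
      _ = 2*LL := by rw [hpA1]; ring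
  have htp_le : (t n : ℝ) * p ≤ 2 * LL := by
    calc (t n : ℝ) * p ≤ 2*A*LL*p := mul_le_mul_of_nonneg_right ht_le hp0.le
      _ = 2 * LL := hALLp
  have htp_ge : 2 * LL - 1 ≤ (t n : ℝ) * p := by
    have h1 : (2*A*LL - 1) * p ≤ (t n:ℝ) * p := mul_le_mul_of_nonneg_right ht_gt.le hp0.le
    have h2 : (2*A*LL - 1) * p = 2*LL - p := by
      calc (2*A*LL - 1) * p = 2*A*LL*p - p := by ring
        _ = 2*LL - p := by rw [hALLp]
    rw [h2] at h1; linarith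
  -- (1-p)^t upper bound
  have hexp_up : (1-p)^(t n) ≤ Real.exp 1 / L^2 := by
    have h1 : (1-p) ≤ Real.exp (-p) := by
      have := Real.add_one_le_exp (-p); linarith
    have h2 : (1-p)^(t n) ≤ Real.exp (-p)^(t n) :=
      pow_le_pow_left₀ h1p.le h1 _
    have h3 : Real.exp (-p)^(t n) = Real.exp ((t n:ℝ) * (-p)) := by
      rw [← Real.exp_nat_mul]
    have h4 : (t n:ℝ) * (-p) ≤ 1 - 2*LL := by
      have he : (t n:ℝ) * (-p) = -((t n:ℝ)*p) := by ring
      rw [he]; linarith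
    have h5 : Real.exp (1 - 2*LL) = Real.exp 1 / L^2 := by
      rw [Real.exp_sub]
      congr 1
      rw [show (2:ℝ)*LL = (2:ℕ)*LL by norm_num, Real.exp_nat_mul, hLLdef,
        Real.exp_log hL0]
    calc (1-p)^(t n) ≤ Real.exp ((t n:ℝ) * (-p)) := h3 ▸ h2
      _ ≤ Real.exp (1 - 2*LL) := Real.exp_le_exp.mpr h4
      _ = Real.exp 1 / L^2 := h5
  -- (1-p)^t lower bound
  have hexp_lo : Real.exp (-1) / L^2 ≤ (1-p)^(t n) := by
    have hq0 : 0 ≤ p/(1-p) := by positivity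
    have h1 : Real.exp (-(p/(1-p))) ≤ 1 - p := by
      have he := Real.add_one_le_exp (p/(1-p))
      have h2 : p/(1-p) + 1 = 1/(1-p) := by field_simp; ring
      have h3 : 1/(1-p) ≤ Real.exp (p/(1-p)) := by linarith
      rw [Real.exp_neg]
      rw [inv_le_comm₀ (Real.exp_pos _) h1p]
      calc (1-p)⁻¹ = 1/(1-p) := (one_div _).symm
        _ ≤ Real.exp (p/(1-p)) := h3
    have h2 : Real.exp (-(p/(1-p)))^(t n) ≤ (1-p)^(t n) :=
      pow_le_pow_left₀ (Real.exp_pos _).le h1 _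
    have h3 : Real.exp (-(p/(1-p)))^(t n) = Real.exp ((t n:ℝ) * (-(p/(1-p)))) := by
      rw [← Real.exp_nat_mul]
    have hfrac : (t n:ℝ) * (p/(1-p)) ≤ 2*LL + 1 := by
      have hinv : 1/(1-p) ≤ 1 + 2*p := by
        rw [div_le_iff₀ h1p]; nlinarith
      have htp0 : 0 ≤ (t n:ℝ) * p := by positivity
      calc (t n:ℝ) * (p/(1-p)) = ((t n:ℝ) * p) * (1/(1-p)) := by ring
        _ ≤ (2*LL) * (1 + 2*p) := by
            apply mul_le_mul htp_le hinv (by positivity) (by positivity)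
        _ = 2*LL + 4*LL*p := by ring
        _ ≤ 2*LL + 1 := by linarith
    have h4 : -(2*LL) - 1 ≤ (t n:ℝ) * (-(p/(1-p))) := by
      have he : (t n:ℝ) * (-(p/(1-p))) = -((t n:ℝ) * (p/(1-p))) := by ring
      rw [he]; linarith
    have h5 : Real.exp (-(2*LL) - 1) = Real.exp (-1) / L^2 := by
      rw [show -(2*LL) - 1 = -1 - 2*LL by ring, Real.exp_sub]
      congr 1
      rw [show (2:ℝ)*LL = (2:ℕ)*LL by norm_num, Real.exp_nat_mul, hLLdef,
        Real.exp_log hL0]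
    calc Real.exp (-1) / L^2 = Real.exp (-(2*LL) - 1) := h5.symm
      _ ≤ Real.exp ((t n:ℝ) * (-(p/(1-p)))) := Real.exp_le_exp.mpr h4
      _ = Real.exp (-(p/(1-p)))^(t n) := h3.symm
      _ ≤ (1-p)^(t n) := h2
  refine ⟨hLL1, hL1, ?_, ?_⟩
  · -- lower bound
    have hmem : M - 1 ∈ Finset.range M := Finset.mem_range.mpr (by omega)
    have hterm : Fsum d M t n ≥ A * ((t n).choose (M-1) : ℝ) * p^(M-1)
        * (1 - p)^(t n - (M-1)) := by
      rw [Fsum]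
      apply Finset.single_le_sum (f := fun j => (n:ℝ)^d * ((t n).choose j : ℝ)
        * ((1/(n:ℝ))^d)^j * (1 - (1/(n:ℝ))^d)^(t n - j)) ?_ hmem
      intro j _
      have : (0:ℝ) ≤ 1 - (1/(n:ℝ))^d := by rw [← hpdef]; linarith
      positivity
    have hMt : (M:ℝ) ≤ (t n:ℝ) := by nlinarith [ht_gt, hMA, hALL, hLL1]
    have hMt' : M ≤ t n := by exact_mod_cast hMt
    have hcast : ((t n + 1 - (M-1) : ℕ) : ℝ) = (t n:ℝ) + 1 - ((M-1:ℕ):ℝ) := by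
      rw [Nat.cast_sub (by omega)]; push_cast; ring
    set X : ℝ := (t n:ℝ) + 1 - ((M-1:ℕ):ℝ) with hXdef
    have hchoose : X^(M-1) / ((M-1).factorial : ℝ) ≤ ((t n).choose (M-1) : ℝ) := by
      have h := Nat.pow_le_choose (M-1) (t n) (α := ℝ)
      rwa [hcast] at h
    have hMcast : ((M-1:ℕ):ℝ) ≤ (M:ℝ) := by exact_mod_cast Nat.sub_le M 1
    have hX : A * LL ≤ X := by
      rw [hXdef]
      nlinarith [ht_gt, hALL, hMA, hMcast]
    have hX0 : 0 ≤ X := le_trans (by positivity) hX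
    have hXp : LL ≤ X * p := by
      have h1 : A * LL * p ≤ X * p := mul_le_mul_of_nonneg_right hX hp0.le
      have h2 : A * LL * p = LL := by
        calc A * LL * p = LL * (p * A) := by ring
          _ = LL := by rw [hpA1]; ring
      linarith
    have hXpow : LL^(M-1) ≤ X^(M-1) * p^(M-1) := by
      rw [← mul_pow]
      exact pow_le_pow_left₀ hLL0.le hXp _
    have hpow_ge : (1-p)^(t n) ≤ (1-p)^(t n - (M-1)) :=
      pow_le_pow_of_le_one h1p.le (by linarith) (Nat.sub_le _ _)
    have step1 : A * (X^(M-1) / ((M-1).factorial : ℝ)) * p^(M-1) * (1-p)^(t n)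
        ≤ A * ((t n).choose (M-1) : ℝ) * p^(M-1) * (1 - p)^(t n - (M-1)) := by
      gcongr
    have step2 : (1/(((M-1).factorial : ℝ) * Real.exp 1)) * (A * LL^(M-1) / L^2)
        ≤ A * (X^(M-1) / ((M-1).factorial : ℝ)) * p^(M-1) * (1-p)^(t n) := by
      have hfac : (0:ℝ) < ((M-1).factorial : ℝ) := by exact_mod_cast (M-1).factorial_pos
      have hid : (1/(((M-1).factorial : ℝ) * Real.exp 1)) * (A * LL^(M-1) / L^2)
          = (A / ((M-1).factorial : ℝ)) * (LL^(M-1) * (Real.exp (-1) / L^2)) := by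
        rw [Real.exp_neg]
        field_simp
      rw [hid]
      have h1 : LL^(M-1) * (Real.exp (-1) / L^2) ≤ (X^(M-1) * p^(M-1)) * (1-p)^(t n) := by
        apply mul_le_mul hXpow hexp_lo (by positivity) (by positivity)
      calc (A / ((M-1).factorial : ℝ)) * (LL^(M-1) * (Real.exp (-1) / L^2))
          ≤ (A / ((M-1).factorial : ℝ)) * ((X^(M-1) * p^(M-1)) * (1-p)^(t n)) := by
            apply mul_le_mul_of_nonneg_left h1 (by positivity)
        _ = A * (X^(M-1) / ((M-1).factorial : ℝ)) * p^(M-1) * (1-p)^(t n) := by ring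
    calc (1/(((M-1).factorial : ℝ) * Real.exp 1)) * (A * LL^(M-1) / L^2)
        ≤ A * (X^(M-1) / ((M-1).factorial : ℝ)) * p^(M-1) * (1-p)^(t n) := step2
      _ ≤ A * ((t n).choose (M-1) : ℝ) * p^(M-1) * (1 - p)^(t n - (M-1)) := step1
      _ ≤ Fsum d M t n := hterm
  · -- upper bound
    have hB : ∀ j ∈ Finset.range M,
        (n:ℝ)^d * ((t n).choose j : ℝ) * ((1/(n:ℝ))^d)^j * (1 - (1/(n:ℝ))^d)^(t n - j)
          ≤ A * ((2*LL)^(M-1) * 2^(M-1)) * (Real.exp 1 / L^2) := by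
      intro j hj
      have hjM : j ≤ M - 1 := by
        have := Finset.mem_range.mp hj; omega
      have hC : ((t n).choose j : ℝ) ≤ (t n:ℝ)^j := by
        exact_mod_cast Nat.choose_le_pow (t n) j
      have hsplit : (1-p)^(t n - j) ≤ 2^(M-1) * (1-p)^(t n) := by
        have hmin : min j (t n) ≤ M - 1 := le_trans (min_le_left _ _) hjM
        have hadd : (t n - j) + min j (t n) = t n := by omega
        have h1 : (1/2:ℝ)^(M-1) ≤ (1-p)^(min j (t n)) := by
          calc (1/2:ℝ)^(M-1) ≤ (1/2:ℝ)^(min j (t n)) :=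
                pow_le_pow_of_le_one (by norm_num) (by norm_num) hmin
            _ ≤ (1-p)^(min j (t n)) := pow_le_pow_left₀ (by norm_num) (by linarith) _
        have h2 : (1-p)^(t n - j) * (1/2:ℝ)^(M-1) ≤ (1-p)^(t n) := by
          calc (1-p)^(t n - j) * (1/2:ℝ)^(M-1)
              ≤ (1-p)^(t n - j) * (1-p)^(min j (t n)) :=
                mul_le_mul_of_nonneg_left h1 (pow_nonneg h1p.le _)
            _ = (1-p)^(t n) := by rw [← pow_add, hadd]
        have h3 := mul_le_mul_of_nonneg_right h2 (by positivity : (0:ℝ) ≤ 2^(M-1))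
        calc (1-p)^(t n - j) = (1-p)^(t n - j) * ((1/2:ℝ)^(M-1) * 2^(M-1)) := by
              rw [← mul_pow]; norm_num
          _ = ((1-p)^(t n - j) * (1/2:ℝ)^(M-1)) * 2^(M-1) := by ring
          _ ≤ (1-p)^(t n) * 2^(M-1) := h3
          _ = 2^(M-1) * (1-p)^(t n) := by ring
      have htppow : (t n:ℝ)^j * p^j ≤ (2*LL)^(M-1) := by
        rw [← mul_pow]
        calc ((t n:ℝ)*p)^j ≤ (2*LL)^j := pow_le_pow_left₀ (by positivity) htp_le _
          _ ≤ (2*LL)^(M-1) := pow_le_pow_right₀ (by linarith) hjM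
      calc (n:ℝ)^d * ((t n).choose j : ℝ) * ((1/(n:ℝ))^d)^j * (1 - (1/(n:ℝ))^d)^(t n - j)
          = A * ((t n).choose j : ℝ) * p^j * (1-p)^(t n - j) := by
            rw [← hAdef, ← hpdef]
        _ ≤ A * (t n:ℝ)^j * p^j * (2^(M-1) * (1-p)^(t n)) := by
            gcongr
        _ = A * ((t n:ℝ)^j * p^j) * (2^(M-1) * (1-p)^(t n)) := by ring
        _ ≤ A * (2*LL)^(M-1) * (2^(M-1) * (Real.exp 1 / L^2)) := by
            have h1 : (2:ℝ)^(M-1) * (1-p)^(t n) ≤ 2^(M-1) * (Real.exp 1 / L^2) :=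
              mul_le_mul_of_nonneg_left hexp_up (by positivity)
            have h2 := mul_le_mul (mul_le_mul_of_nonneg_left htppow hA0.le) h1
              (by positivity) (by positivity)
            calc A * ((t n:ℝ)^j * p^j) * (2^(M-1) * (1-p)^(t n))
                = (A * ((t n:ℝ)^j * p^j)) * (2^(M-1) * (1-p)^(t n)) := by ring
              _ ≤ (A * (2*LL)^(M-1)) * (2^(M-1) * (Real.exp 1 / L^2)) := h2
              _ = A * (2*LL)^(M-1) * (2^(M-1) * (Real.exp 1 / L^2)) := by ring
        _ = A * ((2*LL)^(M-1) * 2^(M-1)) * (Real.exp 1 / L^2) := by ring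
    calc Fsum d M t n ≤ ∑ _j ∈ Finset.range M, A * ((2*LL)^(M-1) * 2^(M-1)) * (Real.exp 1 / L^2) :=
          Finset.sum_le_sum hB
      _ = (M:ℝ) * (A * ((2*LL)^(M-1) * 2^(M-1)) * (Real.exp 1 / L^2)) := by
          rw [Finset.sum_const, Finset.card_range, nsmul_eq_mul]
      _ = ((M:ℝ)*4^(M-1)*Real.exp 1) * (A * LL^(M-1) / L^2) := by
          rw [show ((4:ℝ))^(M-1) = 2^(M-1)*2^(M-1) by rw [← mul_pow]; norm_num,
            mul_pow 2 LL (M-1)]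
          ring

lemma expectation_eq (d n t M : ℕ) (hn : 1 ≤ n)
    (Y : ℕ → Ω → Torus d) (hY : ∀ i, Measurable (Y i))
    (hunif : ∀ i, Measure.map (Y i) ℙ = (volume : Measure (Torus d)))
    (hind : iIndepFun Y ℙ) :
    ∫ ω, (nonfullCount n t M (fun i : Fin t => Y i ω) : ℝ) ∂ℙ
      = ∑ j ∈ Finset.range M, (n:ℝ)^d * (t.choose j : ℝ) * ((1/n:ℝ)^d)^j
          * (1 - (1/n:ℝ)^d)^(t-j) := by
  set p : ℝ := (1/n:ℝ)^d with hp
  have hp0 : 0 ≤ p := by positivity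
  have hp1 : p ≤ 1 := by
    apply pow_le_one₀ (by positivity)
    rw [div_le_one (by exact_mod_cast hn : (0:ℝ) < n)]
    exact_mod_cast hn
  set q : ENNReal := ENNReal.ofReal p with hqdef
  have hq : ∀ (z : Fin d → Fin n) i, ℙ (Y i ⁻¹' tcube n z) = q := by
    intro z i
    rw [← Measure.map_apply (hY i) (tcube_meas hn z), hunif i, tcube_vol hn z]
  -- N z ω
  set N : (Fin d → Fin n) → Ω → ℕ :=
    fun z ω => ((Finset.range t).filter (fun m => Y m ω ∈ tcube n z)).card with hN
  have hmeasE : ∀ z, MeasurableSet {ω | N z ω < M} := fun z =>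
    nonfull_meas Y (tcube n z) t hY (tcube_meas hn z) M
  -- integrand rewrite
  have hint : ∀ ω, (nonfullCount n t M (fun i : Fin t => Y i ω) : ℝ)
      = ∑ z : Fin d → Fin n, if N z ω < M then (1:ℝ) else 0 := by
    intro ω
    rw [Finset.sum_boole]
    congr 1
    rw [nonfullCount, Nat.card_eq_fintype_card, Fintype.card_subtype]
    congr 1
    apply Finset.filter_congr
    intro z _
    rw [card_bridge t (fun m => Y m ω ∈ tcube n z)]
  simp_rw [hint]
  rw [integral_finset_sum]
  · have hone : ∀ z : Fin d → Fin n,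
        ∫ ω, (if N z ω < M then (1:ℝ) else 0) ∂ℙ = (ℙ {ω | N z ω < M}).toReal := by
      intro z
      have : (fun ω => if N z ω < M then (1:ℝ) else 0)
          = Set.indicator {ω | N z ω < M} (fun _ => (1:ℝ)) := by
        ext ω; simp [Set.indicator_apply, mem_setOf_eq]
      rw [this, integral_indicator_const _ (hmeasE z)]
      simp
      rfl
    simp_rw [hone]
    have hprob : ∀ z : Fin d → Fin n, (ℙ {ω | N z ω < M}).toReal
        = ∑ j ∈ Finset.range M, (t.choose j : ℝ) * p^j * (1-p)^(t-j) := by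
      intro z
      rw [hN]
      rw [nonfull_prob Y (tcube n z) t hY (tcube_meas hn z) hind q (hq z) M]
      rw [ENNReal.toReal_sum (fun j _ => by
        apply ENNReal.mul_ne_top (ENNReal.mul_ne_top (ENNReal.natCast_ne_top _) ?_) ?_
        · exact ENNReal.pow_ne_top ENNReal.ofReal_ne_top
        · exact ENNReal.pow_ne_top (ENNReal.sub_ne_top ENNReal.one_ne_top))]
      apply Finset.sum_congr rfl
      intro j _
      rw [ENNReal.toReal_mul, ENNReal.toReal_mul, ENNReal.toReal_pow, ENNReal.toReal_pow,
        ENNReal.toReal_natCast, ENNReal.toReal_ofReal hp0,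
        ENNReal.toReal_sub_of_le (show q ≤ 1 from ENNReal.ofReal_le_one.mpr hp1)
          ENNReal.one_ne_top, ENNReal.toReal_one, hqdef, ENNReal.toReal_ofReal hp0]
    simp_rw [hprob]
    rw [Finset.sum_const, Finset.card_univ]
    have hcard : (Fintype.card (Fin d → Fin n) : ℝ) = (n:ℝ)^d := by
      simp [Fintype.card_fun]
    rw [nsmul_eq_mul, Finset.mul_sum]
    apply Finset.sum_congr rfl
    intro j _
    rw [hcard]; ring
  · intro z _
    have : (fun ω => if N z ω < M then (1:ℝ) else 0)
        = Set.indicator {ω | N z ω < M} (fun _ => (1:ℝ)) := by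
      ext ω; simp [Set.indicator_apply, mem_setOf_eq]
    rw [this]
    exact (integrable_const 1).indicator (hmeasE z)
end Aux

/-- With `t₂ = 2c^d r^{-d} log log(1/r)` points (`r = c/n → 0`), the expected number of
`M`-nonfull cubes of the side-`r/c` tessellation equals
`Σ_{i<M} (c/r)^d C(t₂,i)(r/c)^{id}(1-(r/c)^d)^{t₂-i}`, which is
`Θ((log log(1/r))^{M-1}/(r^d (log(1/r))^2)) = o(|T|/log(1/r))`. -/
theorem stmt_19 {Ω : Type*} [MeasureSpace Ω] [IsProbabilityMeasure (ℙ : Measure Ω)]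
    (d k c M : ℕ) (hd : 1 ≤ d) (hk : 1 ≤ k) (hc : 1 ≤ c) (hM : 1 ≤ M)
    (r : ℕ → ℝ) (hr : ∀ n : ℕ, 1 ≤ n → r n = (c : ℝ) / n)
    (t₂ : ℕ → ℕ)
    (ht₂ : ∀ n : ℕ, 1 ≤ n →
      t₂ n = ⌊2 * (c : ℝ) ^ d * (1 / r n) ^ d * Real.log (Real.log (1 / r n))⌋₊)
    (X : ℕ → ℕ → Ω → Torus d)
    (hmeas : ∀ n i, Measurable (X n i))
    (hunif : ∀ n i, Measure.map (X n i) ℙ = (volume : Measure (Torus d)))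
    (hindep : ∀ n,
      iIndepFun (X n) ℙ) :
    (∀ n : ℕ, 1 ≤ n →
      ∫ ω, (nonfullCount n (t₂ n) M (fun i : Fin (t₂ n) => X n i ω) : ℝ) ∂ℙ
        = ∑ i ∈ Finset.range M, ((c : ℝ) / r n) ^ d * ((t₂ n).choose i : ℝ)
            * (r n / c) ^ (d * i) * (1 - (r n / c) ^ d) ^ (t₂ n - i)) ∧
    (fun n => ∫ ω, (nonfullCount n (t₂ n) M (fun i : Fin (t₂ n) => X n i ω) : ℝ) ∂ℙ)
      =Θ[atTop] (fun n => (Real.log (Real.log (1 / r n))) ^ (M - 1)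
          / (r n ^ d * (Real.log (1 / r n)) ^ 2)) ∧
    (fun n => ∫ ω, (nonfullCount n (t₂ n) M (fun i : Fin (t₂ n) => X n i ω) : ℝ) ∂ℙ)
      =o[atTop] (fun n => (n : ℝ) ^ d / Real.log (1 / r n)) := by
  have hc0 : (0:ℝ) < c := by exact_mod_cast hc
  -- part 1
  have part1 : ∀ n : ℕ, 1 ≤ n →
      ∫ ω, (nonfullCount n (t₂ n) M (fun i : Fin (t₂ n) => X n i ω) : ℝ) ∂ℙ
        = ∑ i ∈ Finset.range M, ((c : ℝ) / r n) ^ d * ((t₂ n).choose i : ℝ)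
            * (r n / c) ^ (d * i) * (1 - (r n / c) ^ d) ^ (t₂ n - i) := by
    intro n hn
    have hn0 : (0:ℝ) < n := by exact_mod_cast hn
    rw [expectation_eq d n (t₂ n) M hn (X n) (hmeas n) (hunif n) (hindep n)]
    apply Finset.sum_congr rfl
    intro j _
    have h1 : (c:ℝ)/r n = (n:ℝ) := by rw [hr n hn]; field_simp
    have h2 : r n / c = 1/(n:ℝ) := by rw [hr n hn]; field_simp
    rw [h1, h2, pow_mul]
  have hFeq : ∀ᶠ n : ℕ in atTop,
      (∫ ω, (nonfullCount n (t₂ n) M (fun i : Fin (t₂ n) => X n i ω) : ℝ) ∂ℙ)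
        = Fsum d M t₂ n := by
    filter_upwards [eventually_ge_atTop 1] with n hn
    rw [expectation_eq d n (t₂ n) M hn (X n) (hmeas n) (hunif n) (hindep n)]
    rfl
  have ht' : ∀ᶠ n : ℕ in atTop, t₂ n = ⌊2*(n:ℝ)^d * Real.log (Real.log ((n:ℝ)/c))⌋₊ := by
    filter_upwards [eventually_ge_atTop 1] with n hn
    have hn0 : (0:ℝ) < n := by exact_mod_cast hn
    rw [ht₂ n hn]
    have hinv : 1 / r n = (n:ℝ)/c := by rw [hr n hn, one_div_div]
    rw [hinv]
    congr 1
    rw [div_pow]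
    field_simp
  have hKB := key_bounds d c M hd hc hM t₂ ht'
  have hLt : Tendsto (fun n : ℕ => Real.log ((n:ℝ)/c)) atTop atTop :=
    Real.tendsto_log_atTop.comp ((tendsto_natCast_atTop_atTop).atTop_div_const hc0)
  refine ⟨part1, ?_, ?_⟩
  · -- Theta
    constructor
    · rw [Asymptotics.isBigO_iff]
      refine ⟨(c:ℝ)^d * ((M:ℝ)*4^(M-1)*Real.exp 1), ?_⟩
      filter_upwards [hKB, hFeq, eventually_ge_atTop 1] with n hkb hfeq hn1
      obtain ⟨hLL1, hL1, hlo, hup⟩ := hkb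
      have hn0 : (0:ℝ) < n := by exact_mod_cast hn1
      have hrn := hr n hn1
      have hlog : Real.log (1/r n) = Real.log ((n:ℝ)/c) := by rw [hrn, one_div_div]
      have hL0 : (0:ℝ) < Real.log ((n:ℝ)/c) := by linarith
      have hLL0 : (0:ℝ) < Real.log (Real.log ((n:ℝ)/c)) := by linarith
      have hA0 : (0:ℝ) < (n:ℝ)^d := by positivity
      have hAc : ((c:ℝ)/n)^d * (n:ℝ)^d = (c:ℝ)^d := by
        rw [← mul_pow]; congr 1; field_simp
      have hlopos : (0:ℝ) < (1/((M-1).factorial * Real.exp 1))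
          * ((n:ℝ)^d * (Real.log (Real.log ((n:ℝ)/c)))^(M-1) / (Real.log ((n:ℝ)/c))^2) := by
        have : (0:ℝ) < ((M-1).factorial : ℝ) := by exact_mod_cast (M-1).factorial_pos
        positivity
      have hgval : (Real.log (Real.log (1/r n)))^(M-1) / (r n^d * (Real.log (1/r n))^2)
          = (Real.log (Real.log ((n:ℝ)/c)))^(M-1) / (((c:ℝ)/n)^d * (Real.log ((n:ℝ)/c))^2) := by
        rw [hlog, hrn]
      have hgpos : (0:ℝ) < (Real.log (Real.log ((n:ℝ)/c)))^(M-1)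
          / (((c:ℝ)/n)^d * (Real.log ((n:ℝ)/c))^2) := by positivity
      have hval : (n:ℝ)^d * (Real.log (Real.log ((n:ℝ)/c)))^(M-1) / (Real.log ((n:ℝ)/c))^2
          = (c:ℝ)^d * ((Real.log (Real.log ((n:ℝ)/c)))^(M-1)
              / (((c:ℝ)/n)^d * (Real.log ((n:ℝ)/c))^2)) := by
        rw [← hAc]
        have hcn0 : (0:ℝ) < ((c:ℝ)/n)^d := by positivity
        field_simp
      rw [Real.norm_eq_abs, Real.norm_eq_abs, hfeq, hgval,
        abs_of_nonneg (le_trans hlopos.le hlo), abs_of_pos hgpos]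
      calc Fsum d M t₂ n
          ≤ ((M:ℝ)*4^(M-1)*Real.exp 1)
            * ((n:ℝ)^d * (Real.log (Real.log ((n:ℝ)/c)))^(M-1) / (Real.log ((n:ℝ)/c))^2) := hup
        _ = (c:ℝ)^d * ((M:ℝ)*4^(M-1)*Real.exp 1) * ((Real.log (Real.log ((n:ℝ)/c)))^(M-1)
              / (((c:ℝ)/n)^d * (Real.log ((n:ℝ)/c))^2)) := by rw [hval]; ring
    · rw [Asymptotics.isBigO_iff]
      refine ⟨((M-1).factorial * Real.exp 1) / (c:ℝ)^d, ?_⟩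
      filter_upwards [hKB, hFeq, eventually_ge_atTop 1] with n hkb hfeq hn1
      obtain ⟨hLL1, hL1, hlo, hup⟩ := hkb
      have hn0 : (0:ℝ) < n := by exact_mod_cast hn1
      have hrn := hr n hn1
      have hlog : Real.log (1/r n) = Real.log ((n:ℝ)/c) := by rw [hrn, one_div_div]
      have hL0 : (0:ℝ) < Real.log ((n:ℝ)/c) := by linarith
      have hLL0 : (0:ℝ) < Real.log (Real.log ((n:ℝ)/c)) := by linarith
      have hA0 : (0:ℝ) < (n:ℝ)^d := by positivity
      have hAc : ((c:ℝ)/n)^d * (n:ℝ)^d = (c:ℝ)^d := by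
        rw [← mul_pow]; congr 1; field_simp
      have hfac0 : (0:ℝ) < ((M-1).factorial : ℝ) := by exact_mod_cast (M-1).factorial_pos
      have hlopos : (0:ℝ) < (1/((M-1).factorial * Real.exp 1))
          * ((n:ℝ)^d * (Real.log (Real.log ((n:ℝ)/c)))^(M-1) / (Real.log ((n:ℝ)/c))^2) := by
        positivity
      have hgval : (Real.log (Real.log (1/r n)))^(M-1) / (r n^d * (Real.log (1/r n))^2)
          = (Real.log (Real.log ((n:ℝ)/c)))^(M-1) / (((c:ℝ)/n)^d * (Real.log ((n:ℝ)/c))^2) := by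
        rw [hlog, hrn]
      have hgpos : (0:ℝ) < (Real.log (Real.log ((n:ℝ)/c)))^(M-1)
          / (((c:ℝ)/n)^d * (Real.log ((n:ℝ)/c))^2) := by positivity
      have hval : (n:ℝ)^d * (Real.log (Real.log ((n:ℝ)/c)))^(M-1) / (Real.log ((n:ℝ)/c))^2
          = (c:ℝ)^d * ((Real.log (Real.log ((n:ℝ)/c)))^(M-1)
              / (((c:ℝ)/n)^d * (Real.log ((n:ℝ)/c))^2)) := by
        rw [← hAc]
        have hcn0 : (0:ℝ) < ((c:ℝ)/n)^d := by positivity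
        field_simp
      rw [Real.norm_eq_abs, Real.norm_eq_abs, hfeq, hgval,
        abs_of_nonneg (le_trans hlopos.le hlo), abs_of_pos hgpos]
      -- goal: gval ≤ ((M-1)! e / c^d) * Fsum
      rw [hval] at hlo
      set G := (Real.log (Real.log ((n:ℝ)/c)))^(M-1)
        / (((c:ℝ)/n)^d * (Real.log ((n:ℝ)/c))^2) with hGdef
      set K := ((M-1).factorial : ℝ) * Real.exp 1 with hKdef
      have hK0 : (0:ℝ) < K := by positivity
      have hcd0 : (0:ℝ) < (c:ℝ)^d := by positivity
      have h3 : (c:ℝ)^d * G ≤ K * Fsum d M t₂ n := by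
        have h4 := mul_le_mul_of_nonneg_left hlo hK0.le
        have h5 : K * (1/K * ((c:ℝ)^d * G)) = (c:ℝ)^d * G := by
          field_simp
        rw [h5] at h4
        exact h4
      rw [div_mul_eq_mul_div, le_div_iff₀ hcd0]
      calc G * (c:ℝ)^d = (c:ℝ)^d * G := by ring
        _ ≤ K * Fsum d M t₂ n := h3
  · -- little o
    rw [Asymptotics.isLittleO_iff]
    intro ε hε
    have h1 := Real.tendsto_pow_log_div_mul_add_atTop 1 0 (M-1) one_ne_zero
    have h2 := h1.comp hLt
    have h2' : Tendsto (fun n:ℕ => Real.log (Real.log ((n:ℝ)/c))^(M-1)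
        / Real.log ((n:ℝ)/c)) atTop (nhds 0) := by
      convert h2 using 2 with n
      simp [Function.comp]
    have h0 : Tendsto (fun n:ℕ => ((M:ℝ)*4^(M-1)*Real.exp 1)
        * (Real.log (Real.log ((n:ℝ)/c))^(M-1) / Real.log ((n:ℝ)/c))) atTop (nhds 0) := by
      have := h2'.const_mul ((M:ℝ)*4^(M-1)*Real.exp 1)
      simpa using this
    have hev := h0.eventually_lt_const hε
    filter_upwards [hKB, hFeq, eventually_ge_atTop 1, hev] with n hkb hfeq hn1 hevn
    obtain ⟨hLL1, hL1, hlo, hup⟩ := hkb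
    have hn0 : (0:ℝ) < n := by exact_mod_cast hn1
    have hrn := hr n hn1
    have hlog : Real.log (1/r n) = Real.log ((n:ℝ)/c) := by rw [hrn, one_div_div]
    have hL0 : (0:ℝ) < Real.log ((n:ℝ)/c) := by linarith
    have hLL0 : (0:ℝ) < Real.log (Real.log ((n:ℝ)/c)) := by linarith
    have hA0 : (0:ℝ) < (n:ℝ)^d := by positivity
    have hfac0 : (0:ℝ) < ((M-1).factorial : ℝ) := by exact_mod_cast (M-1).factorial_pos
    have hlopos : (0:ℝ) < (1/((M-1).factorial * Real.exp 1))
        * ((n:ℝ)^d * (Real.log (Real.log ((n:ℝ)/c)))^(M-1) / (Real.log ((n:ℝ)/c))^2) := by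
      positivity
    have hhpos : (0:ℝ) < (n:ℝ)^d / Real.log ((n:ℝ)/c) := by positivity
    rw [Real.norm_eq_abs, Real.norm_eq_abs, hfeq, hlog,
      abs_of_nonneg (le_trans hlopos.le hlo), abs_of_pos hhpos]
    calc Fsum d M t₂ n
        ≤ ((M:ℝ)*4^(M-1)*Real.exp 1)
          * ((n:ℝ)^d * (Real.log (Real.log ((n:ℝ)/c)))^(M-1) / (Real.log ((n:ℝ)/c))^2) := hup
      _ = (((M:ℝ)*4^(M-1)*Real.exp 1)
          * (Real.log (Real.log ((n:ℝ)/c))^(M-1) / Real.log ((n:ℝ)/c)))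
          * ((n:ℝ)^d / Real.log ((n:ℝ)/c)) := by ring
      _ ≤ ε * ((n:ℝ)^d / Real.log ((n:ℝ)/c)) :=
          mul_le_mul_of_nonneg_right hevn.le hhpos.le
end
end
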